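/- arXiv:2604.27040 — 8 statements merged into one kernel-verified Lean document; each statement's English description precedes it below -/
import Mathlib

section
/- For count matrices E and E' of total sum n, the trace Tr ((C_E)† · C_{E'}) equals 0 if E ≠ E', and Tr ((C_E)† · C_E) equals the orbit size, namely the multinomial coefficient n! / ∏_{(a,b)} (E (a,b))!. -/
open scoped BigOperators
open Matrix

/-- The count matrix of a pair of multi-indices `(i, j)`:
`E (a, b) = |{k : i k = a ∧ j k = b}|`. -/
def cmat {n : ℕ} {σ : Type*} [DecidableEq σ] (i j : Fin n → σ) : σ × σ → ℕ :=
  fun ab => (Finset.univ.filter fun k => i k = ab.1 ∧ j k = ab.2).card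

/-- The orbit matrix `C_E`. -/
def orbMat (n : ℕ) (σ : Type*) [Fintype σ] [DecidableEq σ] (E : σ × σ → ℕ) :
    Matrix (Fin n → σ) (Fin n → σ) ℂ :=
  Matrix.of fun i j => if cmat i j = E then 1 else 0

open Finset

lemma fib_cons {τ : Type*} [DecidableEq τ] {n : ℕ} (t0 : τ) (g : Fin n → τ) (t : τ) :
    (Finset.univ.filter fun k : Fin (n+1) => (Fin.cons t0 g : Fin (n+1) → τ) k = t).card
      = (Finset.univ.filter fun k => g k = t).card + if t0 = t then 1 else 0 := by
  rw [Finset.card_filter, Finset.card_filter, Fin.sum_univ_succ]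
  simp [add_comm]

lemma count_mul {τ : Type*} [Fintype τ] [DecidableEq τ] :
    ∀ (n : ℕ) (E : τ → ℕ), (∑ t, E t = n) →
    (Finset.univ.filter fun f : Fin n → τ =>
        ∀ t, (Finset.univ.filter fun k => f k = t).card = E t).card * ∏ t, (E t).factorial
      = n.factorial := by
  intro n
  induction n with
  | zero =>
    intro E hE
    have hE0 : ∀ t, E t = 0 := fun t =>
      (Finset.sum_eq_zero_iff).mp hE t (Finset.mem_univ t)
    have : (Finset.univ.filter fun f : Fin 0 → τ =>
        ∀ t, (Finset.univ.filter fun k => f k = t).card = E t) = Finset.univ := by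
      apply Finset.filter_true_of_mem
      intro f _ t
      simp [hE0 t]
    simp [this, hE0, Finset.prod_eq_one]
  | succ n ih =>
    intro E hE
    have key : (Finset.univ.filter fun f : Fin (n+1) → τ =>
        ∀ t, (Finset.univ.filter fun k => f k = t).card = E t).card
        = ∑ t0 : τ, (Finset.univ.filter fun g : Fin n → τ =>
            ∀ t, (Finset.univ.filter fun k => g k = t).card + (if t0 = t then 1 else 0) = E t).card := by
      rw [Finset.card_filter]
      rw [← Equiv.sum_comp (Fin.consEquiv (fun _ : Fin (n+1) => τ))]
      rw [Fintype.sum_prod_type]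
      congr 1
      ext t0
      rw [Finset.card_filter]
      congr 1
      ext g
      simp only [Fin.consEquiv_apply]
      congr 1
      simp only [eq_iff_iff]
      constructor
      · intro h t; rw [← fib_cons]; exact h t
      · intro h t; rw [fib_cons]; exact h t
    rw [key, Finset.sum_mul]
    have term : ∀ t0 : τ, (Finset.univ.filter fun g : Fin n → τ =>
            ∀ t, (Finset.univ.filter fun k => g k = t).card + (if t0 = t then 1 else 0) = E t).card
          * ∏ t, (E t).factorial = E t0 * n.factorial := by
      intro t0
      clear key
      rcases h0 : E t0 with _ | m
      · have : (Finset.univ.filter fun g : Fin n → τ =>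
            ∀ t, (Finset.univ.filter fun k => g k = t).card + (if t0 = t then 1 else 0) = E t) = ∅ := by
          apply Finset.filter_false_of_mem
          intro g _ h
          have := h t0
          simp [h0] at this
        simp [this]
      · set E' : τ → ℕ := fun t => if t = t0 then m else E t with hE'def
        clear_value E'
        have hEt0 : E' t0 = m := by rw [hE'def]; simp
        have hE'not : ∀ t, t ≠ t0 → E' t = E t := by
          intro t ht
          rw [hE'def]
          simp [ht]
        clear hE'def
        have hpred : ∀ g : Fin n → τ,
            (∀ t, (Finset.univ.filter fun k => g k = t).card + (if t0 = t then 1 else 0) = E t)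
            ↔ (∀ t, (Finset.univ.filter fun k => g k = t).card = E' t) := by
          intro g
          constructor
          · intro h t
            have ht' := h t
            by_cases ht : t = t0
            · subst ht
              rw [if_pos rfl] at ht'
              rw [hEt0]
              omega
            · rw [if_neg (Ne.symm ht)] at ht'
              rw [hE'not t ht]
              omega
          · intro h t
            have ht' := h t
            by_cases ht : t = t0
            · subst ht
              rw [hEt0] at ht'
              rw [if_pos rfl, ht', h0]
            · rw [hE'not t ht] at ht'
              rw [if_neg (Ne.symm ht), ht']
              omega
        have hsum' : ∑ t, E' t = n := by
          have h1 : ∑ t, E' t = E' t0 + ∑ t ∈ Finset.univ.erase t0, E' t :=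
            (Finset.add_sum_erase _ E' (Finset.mem_univ t0)).symm
          have h2 : ∑ t, E t = E t0 + ∑ t ∈ Finset.univ.erase t0, E t :=
            (Finset.add_sum_erase _ E (Finset.mem_univ t0)).symm
          have h4 : ∑ t ∈ Finset.univ.erase t0, E' t = ∑ t ∈ Finset.univ.erase t0, E t :=
            Finset.sum_congr rfl (fun t ht => hE'not t (Finset.ne_of_mem_erase ht))
          omega
        have hprod : ∏ t, (E t).factorial = (m+1) * ∏ t, (E' t).factorial := by
          have h1 : ∏ t, (E' t).factorial
              = (∏ t ∈ Finset.univ.erase t0, (E' t).factorial) * (E' t0).factorial :=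
            (Finset.prod_erase_mul _ _ (Finset.mem_univ t0)).symm
          have h2 : ∏ t, (E t).factorial
              = (∏ t ∈ Finset.univ.erase t0, (E t).factorial) * (E t0).factorial :=
            (Finset.prod_erase_mul _ _ (Finset.mem_univ t0)).symm
          have h4 : ∏ t ∈ Finset.univ.erase t0, (E' t).factorial
              = ∏ t ∈ Finset.univ.erase t0, (E t).factorial :=
            Finset.prod_congr rfl (fun t ht => by rw [hE'not t (Finset.ne_of_mem_erase ht)])
          rw [h2, h1, h4, hEt0, h0, Nat.factorial_succ]
          ring
        have hih := ih E' hsum'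
        have hfil : (Finset.univ.filter fun g : Fin n → τ =>
              ∀ t, (Finset.univ.filter fun k => g k = t).card + (if t0 = t then 1 else 0) = E t)
            = (Finset.univ.filter fun g : Fin n → τ =>
              ∀ t, (Finset.univ.filter fun k => g k = t).card = E' t) := by
          apply Finset.filter_congr
          intro g _
          simp only [hpred g]
        rw [hfil, hprod, mul_comm (m+1) (∏ t, (E' t).factorial), ← mul_assoc, hih]
        exact mul_comm _ _
    rw [Finset.sum_congr rfl (fun t0 _ => term t0), ← Finset.sum_mul, hE,
        Nat.factorial_succ]

/-- Orthogonality of orbit matrices: `Tr ((C_E)† · C_{E'})` vanishes for `E ≠ E'`, and for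
`E = E'` it equals the orbit size, the multinomial coefficient `n! / ∏ (a,b), (E (a,b))!`. -/
theorem orbit_orthogonality (n d : ℕ) (hd : 1 ≤ d) (E E' : Fin d × Fin d → ℕ)
    (hE : ∑ ab, E ab = n) (hE' : ∑ ab, E' ab = n) :
    Matrix.trace ((orbMat n (Fin d) E)ᴴ * orbMat n (Fin d) E') =
      if E = E' then
        (n.factorial : ℂ) / ∏ ab : Fin d × Fin d, ((E ab).factorial : ℂ)
      else 0 := by
  classical
  have htr : Matrix.trace ((orbMat n (Fin d) E)ᴴ * orbMat n (Fin d) E')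
      = ∑ j : Fin n → Fin d, ∑ i : Fin n → Fin d,
          (if cmat i j = E then (1:ℂ) else 0) * (if cmat i j = E' then (1:ℂ) else 0) := by
    simp [Matrix.trace, Matrix.mul_apply, orbMat, Matrix.conjTranspose_apply,
      apply_ite (star : ℂ → ℂ)]
  by_cases h : E = E'
  · subst h
    rw [htr, if_pos rfl]
    have hterm : ∀ j i : Fin n → Fin d,
        (if cmat i j = E then (1:ℂ) else 0) * (if cmat i j = E then (1:ℂ) else 0)
        = if cmat i j = E then (1:ℂ) else 0 := by
      intro j i; by_cases hc : cmat i j = E <;> simp [hc]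
    simp only [hterm]
    have hsum : (∑ j : Fin n → Fin d, ∑ i : Fin n → Fin d,
          if cmat i j = E then (1:ℂ) else 0)
        = ∑ p : (Fin n → Fin d) × (Fin n → Fin d),
            if cmat p.2 p.1 = E then (1:ℂ) else 0 :=
      (Fintype.sum_prod_type (fun p : (Fin n → Fin d) × (Fin n → Fin d) =>
        if cmat p.2 p.1 = E then (1:ℂ) else 0)).symm
    rw [hsum, Finset.sum_boole]
    have hbij : (Finset.univ.filter fun p : (Fin n → Fin d) × (Fin n → Fin d) =>
          cmat p.2 p.1 = E).card
        = (Finset.univ.filter fun f : Fin n → Fin d × Fin d =>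
            ∀ t, (Finset.univ.filter fun k => f k = t).card = E t).card := by
      apply Finset.card_nbij' (fun p => fun k => (p.2 k, p.1 k))
        (fun f => (fun k => (f k).2, fun k => (f k).1))
      · intro p hp
        rw [Finset.mem_coe, Finset.mem_filter] at hp ⊢
        refine ⟨Finset.mem_univ _, ?_⟩
        intro t
        rw [← hp.2]
        unfold cmat
        congr 1
        apply Finset.filter_congr
        intro k _
        simp [Prod.ext_iff]
      · intro f hf
        rw [Finset.mem_coe, Finset.mem_filter] at hf ⊢
        refine ⟨Finset.mem_univ _, ?_⟩
        funext t
        rw [← hf.2 t]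
        unfold cmat
        congr 1
        apply Finset.filter_congr
        intro k _
        simp [Prod.ext_iff]
      · intro p _; rfl
      · intro f _; rfl
    rw [hbij]
    have hne : (∏ ab : Fin d × Fin d, ((E ab).factorial : ℂ)) ≠ 0 := by
      apply Finset.prod_ne_zero_iff.mpr
      intro ab _
      exact_mod_cast (Nat.factorial_pos (E ab)).ne'
    rw [eq_div_iff hne]
    have := count_mul n E hE
    push_cast [← this]
    ring
  · rw [htr, if_neg h]
    apply Finset.sum_eq_zero
    intro j _
    apply Finset.sum_eq_zero
    intro i _
    by_cases h1 : cmat i j = E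
    · have h2 : cmat i j ≠ E' := fun h2 => h (h1 ▸ h2)
      simp [h1, h2]
      exact h
    · simp [h1]
end

section
/- For a count matrix E of total sum n, the trace of the orbit matrix satisfies: Tr C_E = 0 unless E is diagonal (i.e. E (a,b) = 0 whenever a ≠ b), and if E is diagonal with diagonal entries m_a := E (a,a), then Tr C_E = n! / ∏_a (m_a)!. -/
open scoped BigOperators
open Matrix

section Aux

variable {n d : ℕ}

/-- The fiber of `Sigma.fst` over `a` in a sigma of `Fin`s. -/
def sigmaFstFiberEquiv (m : Fin d → ℕ) (a : Fin d) :
    {p : Σ b, Fin (m b) // p.1 = a} ≃ Fin (m a) where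
  toFun p := Fin.cast (congrArg m p.2) p.1.2
  invFun x := ⟨⟨a, x⟩, rfl⟩
  left_inv := by rintro ⟨⟨b, x⟩, rfl⟩; rfl
  right_inv := fun x => rfl

lemma exists_fiber_card (m : Fin d → ℕ) (hm : ∑ a, m a = n) :
    ∃ f : Fin n → Fin d, ∀ a, Fintype.card {x // f x = a} = m a := by
  have hcard : Fintype.card (Σ a, Fin (m a)) = Fintype.card (Fin n) := by
    simp [Fintype.card_sigma, hm]
  obtain ⟨e⟩ := Fintype.card_eq.mp hcard
  refine ⟨fun x => (e.symm x).1, fun a => ?_⟩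
  rw [Fintype.card_congr ((Equiv.subtypeEquiv e.symm fun x => Iff.rfl).trans
    (sigmaFstFiberEquiv m a))]
  exact Fintype.card_fin _

/-- Permutations carrying `g` to `f` correspond to families of fiber bijections. -/
def permFiberEquiv {σ : Type*} [DecidableEq σ] (f g : Fin n → σ) :
    {π : Equiv.Perm (Fin n) // g ∘ ⇑π = f} ≃ ∀ a, ({x // f x = a} ≃ {x // g x = a}) where
  toFun π a := Equiv.subtypeEquiv π.1 fun x => by
    have : g (π.1 x) = f x := congrFun π.2 x
    rw [this]
  invFun e := ⟨Equiv.ofFiberEquiv e, funext fun x => Equiv.ofFiberEquiv_map e x⟩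
  left_inv := by
    rintro ⟨π, hπ⟩
    ext x
    simp only [Equiv.ofFiberEquiv, Equiv.trans_apply, Equiv.sigmaCongrRight_apply]
    rfl
  right_inv := by
    intro e
    funext a
    ext ⟨x, hx⟩
    subst hx
    rfl

lemma count_lemma (m : Fin d → ℕ) (hm : ∑ a, m a = n) :
    (Finset.univ.filter fun f : Fin n → Fin d =>
        ∀ a, (Finset.univ.filter fun k => f k = a).card = m a).card *
      ∏ a, (m a).factorial = n.factorial := by
  classical
  set S : Finset (Fin n → Fin d) :=
    Finset.univ.filter fun f => ∀ a, (Finset.univ.filter fun k => f k = a).card = m a with hS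
  have hmem : ∀ f : Fin n → Fin d,
      f ∈ S ↔ ∀ a, Fintype.card {x // f x = a} = m a := by
    intro f
    simp only [hS, Finset.mem_filter, Finset.mem_univ, true_and]
    constructor
    · intro h a; rw [Fintype.card_subtype]; exact h a
    · intro h a; rw [← Fintype.card_subtype]; exact h a
  obtain ⟨f₀, hf₀⟩ := exists_fiber_card m hm
  have hf₀S : f₀ ∈ S := (hmem f₀).2 hf₀
  have hmaps : ∀ π : Equiv.Perm (Fin n), f₀ ∘ ⇑π ∈ S := by
    intro π
    refine (hmem _).2 fun a => ?_
    have e : {x // (f₀ ∘ ⇑π) x = a} ≃ {x // f₀ x = a} :=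
      Equiv.subtypeEquiv π fun x => Iff.rfl
    exact (Fintype.card_congr e).trans (hf₀ a)
  have key : ∀ f ∈ S,
      (Finset.univ.filter fun π : Equiv.Perm (Fin n) => f₀ ∘ ⇑π = f).card =
        ∏ a, (m a).factorial := by
    intro f hf
    rw [← Fintype.card_subtype, Fintype.card_congr (permFiberEquiv f f₀),
      Fintype.card_pi]
    refine Finset.prod_congr rfl fun a _ => ?_
    have h1 : Fintype.card {x // f x = a} = m a := (hmem f).1 hf a
    have h2 : Fintype.card {x // f₀ x = a} = m a := hf₀ a
    rw [Fintype.card_equiv (Fintype.equivOfCardEq (h1.trans h2.symm)), h1]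
  have := Finset.card_eq_sum_card_fiberwise
    (f := fun π : Equiv.Perm (Fin n) => f₀ ∘ ⇑π) (s := Finset.univ) (t := S)
    (fun π _ => hmaps π)
  rw [Finset.sum_congr rfl key, Finset.sum_const, smul_eq_mul] at this
  rw [← this, Finset.card_univ, Fintype.card_perm, Fintype.card_fin]

end Aux

/-- The trace of an orbit matrix vanishes unless the count matrix `E` is diagonal, and for
diagonal `E` with diagonal entries `m_a = E (a,a)` it equals `n! / ∏ a, (m_a)!`. -/
theorem trace_orbMat (n d : ℕ) (hd : 1 ≤ d) (E : Fin d × Fin d → ℕ)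
    (hE : ∑ ab, E ab = n) :
    Matrix.trace (orbMat n (Fin d) E) =
      if ∀ a b : Fin d, a ≠ b → E (a, b) = 0 then
        (n.factorial : ℂ) / ∏ a : Fin d, ((E (a, a)).factorial : ℂ)
      else 0 := by
  classical
  have htr : Matrix.trace (orbMat n (Fin d) E) =
      ((Finset.univ.filter fun i : Fin n → Fin d => cmat i i = E).card : ℂ) := by
    rw [Matrix.trace]
    simp only [Matrix.diag, orbMat, Matrix.of_apply]
    rw [Finset.sum_boole]
  by_cases h : ∀ a b : Fin d, a ≠ b → E (a, b) = 0
  · rw [if_pos h, htr]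
    set m : Fin d → ℕ := fun a => E (a, a) with hm'
    have hdiag : ∀ i : Fin n → Fin d, cmat i i = E ↔
        ∀ a, (Finset.univ.filter fun k => i k = a).card = m a := by
      intro i
      constructor
      · intro hi a
        have := congrFun hi (a, a)
        simpa [cmat, and_self] using this
      · intro hi
        funext ab
        obtain ⟨a, b⟩ := ab
        by_cases hab : a = b
        · subst hab
          simpa [cmat, and_self] using hi a
        · have h0 : (Finset.univ.filter fun k => i k = a ∧ i k = b).card = 0 := by
            rw [Finset.card_eq_zero, Finset.filter_eq_empty_iff]
            rintro k - ⟨h1, h2⟩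
            exact hab (h1 ▸ h2 ▸ rfl)
          simp [cmat, h0, h a b hab]
    have hm : ∑ a, m a = n := by
      rw [← hE, Fintype.sum_prod_type]
      refine Finset.sum_congr rfl fun a _ => ?_
      exact (Finset.sum_eq_single a (fun b _ hb => h a b (Ne.symm hb)) (by simp)).symm
    have hcnt := count_lemma (n := n) m hm
    have hfilter : (Finset.univ.filter fun i : Fin n → Fin d => cmat i i = E) =
        Finset.univ.filter fun f : Fin n → Fin d =>
          ∀ a, (Finset.univ.filter fun k => f k = a).card = m a := by
      apply Finset.filter_congr
      intro i _
      exact ⟨fun hi => (hdiag i).1 hi, fun hi => (hdiag i).2 hi⟩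
    rw [hfilter]
    have hprod : (∏ a : Fin d, ((E (a, a)).factorial : ℂ)) ≠ 0 := by
      refine Finset.prod_ne_zero_iff.2 fun a _ => ?_
      exact_mod_cast (Nat.factorial_pos _).ne'
    rw [eq_div_iff hprod]
    have := congrArg (fun k : ℕ => (k : ℂ)) hcnt
    push_cast at this
    simpa using this
  · rw [if_neg h, htr]
    push_neg at h
    obtain ⟨a, b, hab, hE0⟩ := h
    have : (Finset.univ.filter fun i : Fin n → Fin d => cmat i i = E) = ∅ := by
      rw [Finset.filter_eq_empty_iff]
      intro i _
      intro hi
      have := congrFun hi (a, b)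
      have h0 : (Finset.univ.filter fun k => i k = a ∧ i k = b).card = 0 := by
        rw [Finset.card_eq_zero, Finset.filter_eq_empty_iff]
        rintro k - ⟨h1, h2⟩
        exact hab (h1 ▸ h2 ▸ rfl)
      rw [cmat] at this
      simp only at this
      rw [h0] at this
      exact hE0 this.symm
    rw [this]
    simp
end

section
/- Let E be a bipartite count matrix of total sum n, with A-marginal E_A and B-marginal E_B. Then the partial trace over B^n of the orbit matrix satisfies Tr_{B^n} (C_E) = τ · κ · C_{E_A}, where τ = 1 if E_B is diagonal (E_B (a_B, b_B) = 0 for a_B ≠ b_B) and τ = 0 otherwise, and κ := ∏_{(a_A,b_A)} [ (E_A (a_A, b_A))! / ∏_{(a_B,b_B)} (E ((a_A, a_B), (b_A, b_B)))! ]. -/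
open scoped BigOperators
open Matrix

/-- The `A`-marginal of a bipartite count matrix:
`E_A (a_A, b_A) = ∑ a_B b_B, E ((a_A, a_B), (b_A, b_B))`. -/
def margA (dA dB : ℕ) (E : (Fin dA × Fin dB) × (Fin dA × Fin dB) → ℕ) :
    Fin dA × Fin dA → ℕ :=
  fun ab => ∑ p : Fin dB × Fin dB, E ((ab.1, p.1), (ab.2, p.2))

/-- The `B`-marginal of a bipartite count matrix:
`E_B (a_B, b_B) = ∑ a_A b_A, E ((a_A, a_B), (b_A, b_B))`. -/
def margB (dA dB : ℕ) (E : (Fin dA × Fin dB) × (Fin dA × Fin dB) → ℕ) :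
    Fin dB × Fin dB → ℕ :=
  fun ab => ∑ p : Fin dA × Fin dA, E ((p.1, ab.1), (p.2, ab.2))

/-- The partial trace over `B^n` of a matrix indexed by bipartite multi-indices. -/
noncomputable def ptraceB (n dA dB : ℕ)
    (X : Matrix (Fin n → Fin dA × Fin dB) (Fin n → Fin dA × Fin dB) ℂ) :
    Matrix (Fin n → Fin dA) (Fin n → Fin dA) ℂ :=
  Matrix.of fun iA jA =>
    ∑ kB : Fin n → Fin dB, X (fun k => (iA k, kB k)) (fun k => (jA k, kB k))

section PtraceHelpers
open scoped Nat

variable {α β γ : Type*} [Fintype α] [DecidableEq α] [Fintype β] [DecidableEq β]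
  [Fintype γ] [DecidableEq γ]

/-- Fiberwise decomposition of equivalences compatible with classifiers. -/
noncomputable def fiberEquivEquiv (f : α → γ) (π : β → γ) :
    {e : α ≃ β // ∀ a, π (e a) = f a} ≃ ∀ c, ({a // f a = c} ≃ {b // π b = c}) := by
  refine Equiv.ofBijective (fun E c =>
    { toFun := fun a => ⟨E.1 a.1, by rw [E.2 a.1, a.2]⟩
      invFun := fun b => ⟨E.1.symm b.1, by
        have h := E.2 (E.1.symm b.1); rw [Equiv.apply_symm_apply] at h; rw [← h, b.2]⟩
      left_inv := fun a => Subtype.ext (E.1.symm_apply_apply a.1)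
      right_inv := fun b => Subtype.ext (E.1.apply_symm_apply b.1) }) ⟨?_, ?_⟩
  · rintro ⟨e, he⟩ ⟨e', he'⟩ h
    refine Subtype.ext (Equiv.ext fun a => ?_)
    have h2 := congrFun h (f a)
    have h3 := congrArg (fun (q : {x // f x = f a} ≃ {b // π b = f a}) => (q ⟨a, rfl⟩ : β)) h2
    simpa using h3
  · intro G
    have key : ∀ (a : α) (c : γ) (hc : f a = c), ((G (f a) ⟨a, rfl⟩ : {b // π b = f a}) : β)
        = ((G c ⟨a, hc⟩ : {b // π b = c}) : β) := by rintro a c rfl; rfl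
    have hbij : Function.Bijective (fun a => ((G (f a) ⟨a, rfl⟩ : {b // π b = f a}) : β)) := by
      constructor
      · intro a a' h
        dsimp only at h
        have hfa : f a = f a' := by
          have h1 := (G (f a) ⟨a, rfl⟩).2
          have h2 := (G (f a') ⟨a', rfl⟩).2
          rw [← h1, ← h2, h]
        rw [key a (f a') hfa] at h
        have : (⟨a, hfa⟩ : {x // f x = f a'}) = ⟨a', rfl⟩ := (G (f a')).injective (Subtype.ext h)
        exact congrArg Subtype.val this
      · intro b
        refine ⟨((G (π b)).symm ⟨b, rfl⟩).1, ?_⟩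
        dsimp only
        have ha : f ((G (π b)).symm ⟨b, rfl⟩).1 = π b := ((G (π b)).symm ⟨b, rfl⟩).2
        rw [key _ (π b) ha]
        have : (⟨((G (π b)).symm ⟨b, rfl⟩).1, ha⟩ : {x // f x = π b}) = (G (π b)).symm ⟨b, rfl⟩ :=
          Subtype.ext rfl
        rw [this, Equiv.apply_symm_apply]
    refine ⟨⟨Equiv.ofBijective _ hbij, fun a => (G (f a) ⟨a, rfl⟩).2⟩, ?_⟩
    funext c
    refine Equiv.ext fun a => Subtype.ext ?_
    show ((G (f a.1) ⟨a.1, rfl⟩ : {b // π b = f a.1}) : β) = _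
    rw [key a.1 c a.2]


variable {α β γ : Type*} [Fintype α] [DecidableEq α] [Fintype β] [DecidableEq β]
  [Fintype γ] [DecidableEq γ]

lemma card_equiv_ite (X Y : Type*) [Fintype X] [DecidableEq X] [Fintype Y] [DecidableEq Y] :
    Fintype.card (X ≃ Y) =
      if Fintype.card X = Fintype.card Y then (Fintype.card X)! else 0 := by
  split_ifs with h
  · exact Fintype.card_equiv (Fintype.equivOfCardEq h)
  · have : IsEmpty (X ≃ Y) := ⟨fun e => h (Fintype.card_congr e)⟩
    exact Fintype.card_eq_zero

lemma card_sigma_fiber {ι : Type*} [Fintype ι] [DecidableEq ι] (k : ι → ℕ) (p0 : ι) :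
    Fintype.card {b : Σ p, Fin (k p) // b.1 = p0} = k p0 := by
  have e : {b : Σ p, Fin (k p) // b.1 = p0} ≃ Fin (k p0) :=
    { toFun := fun x => Fin.cast (congrArg k x.2) x.1.2
      invFun := fun y => ⟨⟨p0, y⟩, rfl⟩
      left_inv := by rintro ⟨⟨p, v⟩, rfl⟩; rfl
      right_inv := fun y => rfl }
  simp [Fintype.card_congr e]

open scoped Nat

variable {α β γ : Type*} [Fintype α] [DecidableEq α] [Fintype β] [DecidableEq β]
  [Fintype γ] [DecidableEq γ]

lemma card_subtype_equiv (f : α → γ) (π : β → γ) :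
    Fintype.card {e : α ≃ β // ∀ a, π (e a) = f a} =
      ∏ c, (if Fintype.card {a // f a = c} = Fintype.card {b // π b = c}
            then (Fintype.card {a // f a = c})! else 0) := by
  rw [Fintype.card_congr (fiberEquivEquiv f π), Fintype.card_pi]
  exact Finset.prod_congr rfl fun c _ => card_equiv_ite _ _

section main
variable (cl : α → β) (m : β × γ → ℕ)

/-- Claim A -/
lemma claimA (h : ∀ b, ∑ c, m (b, c) = Fintype.card {a // cl a = b}) :
    Fintype.card {e : α ≃ (Σ p : β × γ, Fin (m p)) // ∀ a, (e a).1.1 = cl a} =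
      ∏ b, (Fintype.card {a // cl a = b})! := by
  refine Eq.trans (card_subtype_equiv cl (fun b' : Σ p : β × γ, Fin (m p) => b'.1.1)) ?_
  refine Finset.prod_congr rfl fun b _ => ?_
  have hc : Fintype.card {b' : Σ p : β × γ, Fin (m p) // b'.1.1 = b} = ∑ c, m (b, c) := by
    have e : {b' : Σ p : β × γ, Fin (m p) // b'.1.1 = b} ≃ Σ c : γ, Fin (m (b, c)) :=
      { toFun := fun x => ⟨x.1.1.2, Fin.cast (congrArg m (Prod.ext x.2 rfl)) x.1.2⟩
        invFun := fun y => ⟨⟨(b, y.1), y.2⟩, rfl⟩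
        left_inv := by rintro ⟨⟨⟨b1, c⟩, v⟩, rfl⟩; rfl
        right_inv := by rintro ⟨c, y⟩; rfl }
    simp [Fintype.card_congr e]
  rw [hc, h b, if_pos rfl]

/-- Claim C : decomposition over the γ-component -/
lemma claimC :
    Fintype.card {e : α ≃ (Σ p : β × γ, Fin (m p)) // ∀ a, (e a).1.1 = cl a} =
      ∑ f : α → γ,
        Fintype.card {e : α ≃ (Σ p : β × γ, Fin (m p)) // ∀ a, (e a).1 = (cl a, f a)} := by
  classical
  set Ω := {e : α ≃ (Σ p : β × γ, Fin (m p)) // ∀ a, (e a).1.1 = cl a}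
  have e1 : Ω ≃ Σ f : α → γ, {x : Ω // (fun a => ((x.1 a).1.2 : γ)) = f} :=
    (Equiv.sigmaFiberEquiv (fun x : Ω => fun a => ((x.1 a).1.2 : γ))).symm
  rw [Fintype.card_congr e1, Fintype.card_sigma]
  refine Finset.sum_congr rfl fun f _ => Fintype.card_congr ?_
  exact
    { toFun := fun x => ⟨x.1.1, fun a => Prod.ext (x.1.2 a) (congrFun x.2 a)⟩
      invFun := fun y => ⟨⟨y.1, fun a => by rw [y.2 a]⟩, funext fun a => by rw [y.2 a]⟩
      left_inv := fun x => Subtype.ext (Subtype.ext rfl)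
      right_inv := fun y => Subtype.ext rfl }

/-- Claim D -/
lemma claimD (f : α → γ) :
    Fintype.card {e : α ≃ (Σ p : β × γ, Fin (m p)) // ∀ a, (e a).1 = (cl a, f a)} =
      ∏ p : β × γ, (if Fintype.card {a // (cl a, f a) = p} = m p then (m p)! else 0) := by
  refine Eq.trans
    (card_subtype_equiv (fun a => (cl a, f a)) (fun b' : Σ p : β × γ, Fin (m p) => b'.1)) ?_
  refine Finset.prod_congr rfl fun p _ => ?_
  rw [card_sigma_fiber]
  split_ifs with h
  · rw [h]
  · rfl
end main

lemma card_good_mul (cl : α → β) (m : β × γ → ℕ)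
    (h : ∀ b, ∑ c, m (b, c) = (Finset.univ.filter fun a => cl a = b).card) :
    (Finset.univ.filter fun f : α → γ => ∀ p : β × γ,
        (Finset.univ.filter fun a => cl a = p.1 ∧ f a = p.2).card = m p).card * ∏ p, (m p)!
      = ∏ b, ((Finset.univ.filter fun a => cl a = b).card)! := by
  classical
  have hcnt : ∀ (f : α → γ) (p : β × γ), Fintype.card {a // (cl a, f a) = p} =
      (Finset.univ.filter fun a => cl a = p.1 ∧ f a = p.2).card := by
    intro f p
    rw [Fintype.card_subtype]
    congr 1
    ext a
    simp [Prod.ext_iff]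
  have h' : ∀ b, ∑ c, m (b, c) = Fintype.card {a // cl a = b} := by
    intro b; rw [Fintype.card_subtype]; exact h b
  have hA := claimA cl m h'
  rw [claimC cl m] at hA
  have hsum : ∑ f : α → γ,
      Fintype.card {e : α ≃ (Σ p : β × γ, Fin (m p)) // ∀ a, (e a).1 = (cl a, f a)} =
      ∑ f : α → γ, (if (∀ p : β × γ,
        (Finset.univ.filter fun a => cl a = p.1 ∧ f a = p.2).card = m p)
        then ∏ p, (m p)! else 0) := by
    refine Finset.sum_congr rfl fun f _ => ?_
    rw [claimD cl m f]
    simp only [hcnt f]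
    split_ifs with hf
    · exact Finset.prod_congr rfl fun p _ => if_pos (hf p)
    · push_neg at hf
      obtain ⟨p, hp⟩ := hf
      exact Finset.prod_eq_zero (Finset.mem_univ p) (if_neg hp)
  rw [hsum] at hA
  rw [Finset.sum_ite, Finset.sum_const_zero, add_zero] at hA
  rw [Finset.sum_const, smul_eq_mul] at hA
  rw [hA]
  exact Finset.prod_congr rfl fun b _ => by rw [Fintype.card_subtype]

lemma card_good_eq_multinomial (cl : α → β) (m : β × γ → ℕ)
    (h : ∀ b, ∑ c, m (b, c) = (Finset.univ.filter fun a => cl a = b).card) :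
    (Finset.univ.filter fun f : α → γ => ∀ p : β × γ,
        (Finset.univ.filter fun a => cl a = p.1 ∧ f a = p.2).card = m p).card
      = ∏ b, Nat.multinomial Finset.univ (fun c => m (b, c)) := by
  have key := card_good_mul cl m h
  have hpos : 0 < ∏ p : β × γ, (m p)! :=
    Finset.prod_pos fun p _ => Nat.factorial_pos _
  refine Nat.eq_of_mul_eq_mul_right hpos ?_
  rw [key]
  have hprod : ∏ p : β × γ, (m p)! = ∏ b, ∏ c, (m (b, c))! := Fintype.prod_prod_type _
  rw [hprod, ← Finset.prod_mul_distrib]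
  refine Finset.prod_congr rfl fun b _ => ?_
  rw [mul_comm, Nat.multinomial_spec, h b]

end PtraceHelpers

lemma margA_cmat (n dA dB : ℕ) (iA jA : Fin n → Fin dA) (kB : Fin n → Fin dB) :
    margA dA dB (cmat (fun k => (iA k, kB k)) (fun k => (jA k, kB k))) = cmat iA jA := by
  funext ab
  simp only [margA, cmat, Finset.card_filter]
  rw [Finset.sum_comm]
  refine Finset.sum_congr rfl fun k _ => ?_
  by_cases h : iA k = ab.1 ∧ jA k = ab.2
  · rw [if_pos h]
    have key : ∀ p : Fin dB × Fin dB,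
        ((iA k, kB k) = (ab.1, p.1) ∧ (jA k, kB k) = (ab.2, p.2)) ↔ p = (kB k, kB k) := by
      intro p; constructor
      · rintro ⟨h1, h2⟩
        rw [Prod.ext_iff] at h1 h2 ⊢
        exact ⟨h1.2.symm, h2.2.symm⟩
      · rintro rfl
        exact ⟨by rw [h.1], by rw [h.2]⟩
    simp only [key]
    simp
  · rw [if_neg h]
    refine (Finset.sum_eq_zero fun p _ => ?_).symm.symm
    rw [if_neg]
    rintro ⟨h1, h2⟩
    exact h ⟨congrArg Prod.fst h1, congrArg Prod.fst h2⟩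

lemma margB_cmat_offdiag {n dA dB : ℕ} (iA jA : Fin n → Fin dA) (kB : Fin n → Fin dB)
    {aB bB : Fin dB} (hne : aB ≠ bB) :
    margB dA dB (cmat (fun k => (iA k, kB k)) (fun k => (jA k, kB k))) (aB, bB) = 0 := by
  simp only [margB, cmat]
  refine Finset.sum_eq_zero fun p _ => ?_
  rw [Finset.card_eq_zero, Finset.filter_eq_empty_iff]
  rintro k - ⟨h1, h2⟩
  exact hne ((congrArg Prod.snd h1).symm.trans (congrArg Prod.snd h2))


/-- Partial trace of a bipartite orbit matrix: `Tr_{B^n} (C_E) = τ · κ · C_{E_A}`, where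
`τ = 1` iff the `B`-marginal of `E` is diagonal and
`κ = ∏_{(a_A,b_A)} (E_A (a_A,b_A))! / ∏_{(a_B,b_B)} (E ((a_A,a_B),(b_A,b_B)))!`. -/
theorem ptraceB_orbMat (n dA dB : ℕ) (hdA : 1 ≤ dA) (hdB : 1 ≤ dB)
    (E : (Fin dA × Fin dB) × (Fin dA × Fin dB) → ℕ) (hE : ∑ vw, E vw = n) :
    ptraceB n dA dB (orbMat n (Fin dA × Fin dB) E) =
      ((if ∀ aB bB : Fin dB, aB ≠ bB → margB dA dB E (aB, bB) = 0 then (1 : ℂ) else 0) *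
        ∏ ab : Fin dA × Fin dA,
          ((margA dA dB E ab).factorial : ℂ) /
            ∏ p : Fin dB × Fin dB, ((E ((ab.1, p.1), (ab.2, p.2))).factorial : ℂ)) •
        orbMat n (Fin dA) (margA dA dB E) := by
  classical
  funext iA jA
  simp only [ptraceB, orbMat, Matrix.smul_apply, Matrix.of_apply, smul_eq_mul]
  by_cases hdiag : ∀ aB bB : Fin dB, aB ≠ bB → margB dA dB E (aB, bB) = 0
  case neg =>
    rw [if_neg hdiag, zero_mul, zero_mul]
    refine Finset.sum_eq_zero fun kB _ => ?_
    rw [if_neg]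
    intro hc
    apply hdiag
    intro aB bB hne
    rw [← hc]
    exact margB_cmat_offdiag iA jA kB hne
  case pos =>
            rw [if_pos hdiag, one_mul]
            have hzero : ∀ (aA bA : Fin dA) (aB bB : Fin dB), aB ≠ bB →
                E ((aA, aB), (bA, bB)) = 0 := by
              intro aA bA aB bB hne
              have h0 := hdiag aB bB hne
              simp only [margB] at h0
              rw [Finset.sum_eq_zero_iff] at h0
              exact h0 (aA, bA) (Finset.mem_univ _)
            by_cases hmA : cmat iA jA = margA dA dB E
            case neg =>
              rw [if_neg hmA, mul_zero]
              refine Finset.sum_eq_zero fun kB _ => ?_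
              rw [if_neg]
              intro hc
              exact hmA (by rw [← margA_cmat n dA dB iA jA kB, hc])
            case pos =>
              rw [if_pos hmA, mul_one]
              set m : (Fin dA × Fin dA) × Fin dB → ℕ :=
                fun q => E ((q.1.1, q.2), (q.1.2, q.2)) with hm
              have hsum_ab : ∀ ab : Fin dA × Fin dA, margA dA dB E ab = ∑ c, m (ab, c) := by
                intro ab
                simp only [margA]
                rw [Fintype.sum_prod_type]
                refine Finset.sum_congr rfl fun aB _ => ?_
                refine Finset.sum_eq_single aB
                  (fun bB _ hne => hzero _ _ _ _ (Ne.symm hne))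
                  (fun h => absurd (Finset.mem_univ _) h)
              have hcl : ∀ b : Fin dA × Fin dA,
                  (Finset.univ.filter fun k => (iA k, jA k) = b).card = cmat iA jA b := by
                intro b
                unfold cmat
                congr 1
                ext k
                simp [Prod.ext_iff]
              have hcond : ∀ b, ∑ c, m (b, c) =
                  (Finset.univ.filter fun k => (iA k, jA k) = b).card := by
                intro b
                rw [hcl b, hmA]
                exact (hsum_ab b).symm
              have hiff : ∀ kB : Fin n → Fin dB,
                  (cmat (fun k => (iA k, kB k)) (fun k => (jA k, kB k)) = E) ↔
                  (∀ q : (Fin dA × Fin dA) × Fin dB,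
                    (Finset.univ.filter fun k => (iA k, jA k) = q.1 ∧ kB k = q.2).card = m q) := by
                intro kB
                constructor
                · intro hc q
                  rw [hm]
                  rw [← hc]
                  show _ = cmat _ _ ((q.1.1, q.2), (q.1.2, q.2))
                  unfold cmat
                  congr 1
                  ext k
                  simp only [Finset.mem_filter, Finset.mem_univ, true_and, Prod.ext_iff]
                  tauto
                · intro hq
                  funext vw
                  obtain ⟨⟨aA, aB⟩, bA, bB⟩ := vw
                  by_cases hB : aB = bB
                  · subst hB
                    have hq' : (Finset.univ.filter fun k =>
                        (iA k, jA k) = (aA, bA) ∧ kB k = aB).card = E ((aA, aB), (bA, aB)) :=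
                      hq ((aA, bA), aB)
                    rw [← hq']
                    unfold cmat
                    congr 1
                    ext k
                    simp only [Finset.mem_filter, Finset.mem_univ, true_and, Prod.ext_iff]
                    tauto
                  · rw [hzero aA bA aB bB hB]
                    unfold cmat
                    rw [Finset.card_eq_zero, Finset.filter_eq_empty_iff]
                    rintro k - ⟨h1, h2⟩
                    exact hB ((congrArg Prod.snd h1).symm.trans (congrArg Prod.snd h2))
              have hcard := card_good_eq_multinomial (fun k => (iA k, jA k)) m hcond
              have hfact : ∀ ab : Fin dA × Fin dA,
                  (∏ p : Fin dB × Fin dB, ((E ((ab.1, p.1), (ab.2, p.2))).factorial : ℂ))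
                    = ∏ c, ((m (ab, c)).factorial : ℂ) := by
                intro ab
                rw [Fintype.prod_prod_type]
                refine Finset.prod_congr rfl fun aB _ => ?_
                refine Finset.prod_eq_single aB
                  (fun bB _ hne => by rw [hzero _ _ _ _ (Ne.symm hne)]; simp)
                  (fun h => absurd (Finset.mem_univ _) h)
              calc (∑ kB : Fin n → Fin dB,
                      if cmat (fun k => (iA k, kB k)) (fun k => (jA k, kB k)) = E then (1:ℂ) else 0)
                  = ∑ kB : Fin n → Fin dB,
                      if (∀ q : (Fin dA × Fin dA) × Fin dB,
                        (Finset.univ.filter fun k => (iA k, jA k) = q.1 ∧ kB k = q.2).card = m q)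
                      then (1:ℂ) else 0 :=
                    Finset.sum_congr rfl fun kB _ => if_congr (hiff kB) rfl rfl
                _ = ((Finset.univ.filter fun kB : Fin n → Fin dB =>
                      ∀ q : (Fin dA × Fin dA) × Fin dB,
                        (Finset.univ.filter fun k => (iA k, jA k) = q.1 ∧ kB k = q.2).card
                          = m q).card : ℂ) := by
                    rw [Finset.sum_boole]
                _ = ((∏ b : Fin dA × Fin dA,
                      Nat.multinomial Finset.univ (fun c => m (b, c)) : ℕ) : ℂ) := by
                    rw [hcard]
                _ = ∏ ab : Fin dA × Fin dA,
                      ((margA dA dB E ab).factorial : ℂ) /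
                        ∏ p : Fin dB × Fin dB,
                          ((E ((ab.1, p.1), (ab.2, p.2))).factorial : ℂ) := by
                    push_cast
                    refine Finset.prod_congr rfl fun ab _ => ?_
                    rw [hfact ab, eq_div_iff, hsum_ab ab]
                    · norm_cast
                      rw [mul_comm]
                      exact Nat.multinomial_spec _ _
                    · exact Finset.prod_ne_zero_iff.mpr fun c _ =>
                        Nat.cast_ne_zero.mpr (Nat.factorial_ne_zero _)
end

section
/- Let E be a bipartite count matrix of total sum n with A-marginal E_A and B-marginal E_B, and let F be a count matrix on Fin d_B of total sum n. Then Tr_{B^n} [ C_E · (1_{A^n} ⊗ (C_F)ᵀ) ] equals κ · C_{E_A} if F = E_B and equals 0 otherwise, where κ := ∏_{(a_A,b_A)} [ (E_A (a_A, b_A))! / ∏_{(a_B,b_B)} (E ((a_A, a_B), (b_A, b_B)))! ], 1_{A^n} is the identity on (ℂ^{d_A})^{⊗n}, and ⊗ denotes the Kronecker product arranged so that the tensor factors match the bipartite multi-index structure. -/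
open scoped BigOperators
open Matrix

/-- The Kronecker product of a matrix on `A^n` with a matrix on `B^n`, arranged so that the
tensor factors match the bipartite multi-index structure. -/
def kronAB (n dA dB : ℕ) (M : Matrix (Fin n → Fin dA) (Fin n → Fin dA) ℂ)
    (N : Matrix (Fin n → Fin dB) (Fin n → Fin dB) ℂ) :
    Matrix (Fin n → Fin dA × Fin dB) (Fin n → Fin dA × Fin dB) ℂ :=
  Matrix.of fun i j =>
    M (fun k => (i k).1) (fun k => (j k).1) * N (fun k => (i k).2) (fun k => (j k).2)

/- ### Auxiliary counting lemmas -/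

namespace PtraceAux

open Finset

section Counting
variable {α τ : Type*} [Fintype α] [DecidableEq α] [Fintype τ] [DecidableEq τ]

private def sval {c : τ → ℕ} (y : Σ t, Fin (c t)) : ℕ := y.2.val

private def fiberEquiv {c : τ → ℕ} (g : α ≃ Σ t, Fin (c t)) (t : τ) :
    {a // (g a).1 = t} ≃ Fin (c t) where
  toFun a := Fin.cast (congrArg c a.2) (g a.1).2
  invFun x := ⟨g.symm ⟨t, x⟩, congrArg Sigma.fst (g.apply_symm_apply ⟨t, x⟩)⟩
  left_inv := by
    rintro ⟨a, ht⟩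
    subst ht
    apply Subtype.ext
    simp only [Fin.cast_eq_cast, cast_eq]
    have : (⟨(g a).1, (g a).2⟩ : Σ t, Fin (c t)) = g a := Sigma.eta _
    rw [this, Equiv.symm_apply_apply]
  right_inv := by
    intro x
    have hy := g.apply_symm_apply ⟨t, x⟩
    apply Fin.ext
    simpa [sval] using congrArg sval hy

theorem count_multinomial (c : τ → ℕ) (hc : ∑ t, c t = Fintype.card α) :
    Fintype.card {f : α → τ // ∀ t, (univ.filter fun a => f a = t).card = c t}
      = Nat.multinomial univ c := by
  classical
  set G := {f : α → τ // ∀ t, (univ.filter fun a => f a = t).card = c t} with hG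
  -- the big bijection
  have key : Fintype.card (Σ f : G, ∀ t, ({a // f.1 a = t} ≃ Fin (c t)))
      = Fintype.card (α ≃ Σ t, Fin (c t)) := by
    apply Fintype.card_of_bijective
      (f := fun x => (Equiv.sigmaFiberEquiv x.1.1).symm.trans (Equiv.sigmaCongrRight x.2))
    constructor
    · rintro ⟨⟨f, hf⟩, e⟩ ⟨⟨f', hf'⟩, e'⟩ h
      have hfa : ∀ a, (⟨f a, e (f a) ⟨a, rfl⟩⟩ : Σ t, Fin (c t)) = ⟨f' a, e' (f' a) ⟨a, rfl⟩⟩ :=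
        fun a => Equiv.ext_iff.mp h a
      have hff' : f = f' := funext fun a => congrArg Sigma.fst (hfa a)
      subst hff'
      have he : e = e' := by
        funext t
        ext ⟨a, ht⟩
        subst ht
        have := congrArg sval (hfa a)
        simpa [sval] using this
      subst he
      rfl
    · intro g
      set f : α → τ := fun a => (g a).1 with hfdef
      have hf : ∀ t, (univ.filter fun a => f a = t).card = c t := by
        intro t
        rw [← Fintype.card_subtype]
        rw [Fintype.card_congr (fiberEquiv g t), Fintype.card_fin]
      refine ⟨⟨⟨f, hf⟩, fiberEquiv g⟩, ?_⟩
      apply Equiv.ext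
      intro a
      show (⟨f a, fiberEquiv g (f a) ⟨a, rfl⟩⟩ : Σ t, Fin (c t)) = g a
      have h2 : fiberEquiv g (f a) ⟨a, rfl⟩ = (g a).2 := by
        apply Fin.ext
        simp [fiberEquiv]
      calc (⟨f a, fiberEquiv g (f a) ⟨a, rfl⟩⟩ : Σ t, Fin (c t))
          = ⟨(g a).1, (g a).2⟩ := by rw [h2]
        _ = g a := Sigma.eta _
  -- compute both sides
  have lhs : Fintype.card (Σ f : G, ∀ t, ({a // f.1 a = t} ≃ Fin (c t)))
      = Fintype.card G * ∏ t, Nat.factorial (c t) := by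
    rw [Fintype.card_sigma]
    have : ∀ f : G, Fintype.card (∀ t, ({a // f.1 a = t} ≃ Fin (c t))) = ∏ t, Nat.factorial (c t) := by
      intro f
      rw [Fintype.card_pi]
      refine Finset.prod_congr rfl fun t _ => ?_
      have hcard : Fintype.card {a // f.1 a = t} = c t := by
        rw [Fintype.card_subtype]; exact f.2 t
      rw [Fintype.card_equiv (Fintype.equivFinOfCardEq hcard), hcard]
    rw [Finset.sum_congr rfl fun f _ => this f, Finset.sum_const, Finset.card_univ, smul_eq_mul]
  have rhs : Fintype.card (α ≃ Σ t, Fin (c t)) = Nat.factorial (Fintype.card α) := by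
    have hcard : Fintype.card (Σ t, Fin (c t)) = Fintype.card α := by
      simp [Fintype.card_sigma, hc]
    rw [Fintype.card_equiv (Fintype.equivOfCardEq hcard.symm)]
  rw [lhs, rhs] at key
  have hspec := Nat.multinomial_spec univ c
  rw [hc] at hspec
  have hpos : 0 < ∏ t, Nat.factorial (c t) := Finset.prod_pos fun t _ => Nat.factorial_pos _
  apply Nat.eq_of_mul_eq_mul_right hpos
  rw [key, mul_comm (Nat.multinomial univ c)] at *
  omega

end Counting


private def fiberPiEquiv {α τ β : Type*} [DecidableEq β] (h : α → β) :
    (α → τ) ≃ ∀ b, ({a // h a = b} → τ) :=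
  ((Equiv.sigmaFiberEquiv h).symm.arrowCongr (Equiv.refl τ)).trans
    (Equiv.piCurry fun _ _ => τ)

private lemma fiberPiEquiv_apply {α τ β : Type*} [DecidableEq β] (h : α → β) (g : α → τ)
    (b : β) (a : {a // h a = b}) : fiberPiEquiv h g b a = g a.1 := rfl

theorem count_fiberwise {α τ β : Type*} [Fintype α] [DecidableEq α] [Fintype τ] [DecidableEq τ]
    [Fintype β] [DecidableEq β] (h : α → β) (c : β → τ → ℕ)
    (hc : ∀ b, ∑ p, c b p = (univ.filter fun a => h a = b).card) :
    (univ.filter fun g : α → τ =>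
        ∀ b p, (univ.filter fun a => h a = b ∧ g a = p).card = c b p).card
      = ∏ b, Nat.multinomial univ (c b) := by
  classical
  rw [← Fintype.card_subtype]
  have hcnt : ∀ (g : α → τ) (b : β) (p : τ),
      (univ.filter fun a => h a = b ∧ g a = p).card
        = (univ.filter fun a : {a // h a = b} => g a.1 = p).card := by
    intro g b p
    rw [← Fintype.card_subtype, ← Fintype.card_subtype]
    exact Fintype.card_congr
      (Equiv.subtypeSubtypeEquivSubtypeInter (fun a => h a = b) (fun a => g a = p)).symm
  have hiff : ∀ g : α → τ, (∀ b p, (univ.filter fun a => h a = b ∧ g a = p).card = c b p)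
      ↔ (fun G : ∀ b, ({a // h a = b} → τ) =>
          ∀ b p, (univ.filter fun a : {a // h a = b} => G b a = p).card = c b p)
        (fiberPiEquiv h g) := by
    intro g
    simp only [fiberPiEquiv_apply]
    constructor
    · intro hg b p
      rw [← hg b p, hcnt g b p]
      rfl
    · intro hg b p
      rw [hcnt g b p, ← hg b p]
      rfl
  rw [Fintype.card_congr (Equiv.subtypeEquiv
    (q := fun G : ∀ b, ({a // h a = b} → τ) =>
      ∀ b p, (univ.filter fun a : {a // h a = b} => G b a = p).card = c b p)
    (fiberPiEquiv h) hiff)]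
  rw [Fintype.card_congr (Equiv.subtypePiEquivPi
    (p := fun b (gb : {a // h a = b} → τ) =>
      ∀ p, (univ.filter fun a : {a // h a = b} => gb a = p).card = c b p))]
  rw [Fintype.card_pi]
  refine Finset.prod_congr rfl fun b _ => ?_
  exact count_multinomial (c b) (by rw [hc b, ← Fintype.card_subtype])


section Marginals

variable {n dA dB : ℕ}

lemma margA_cmat (iA jA : Fin n → Fin dA) (kB mB : Fin n → Fin dB) :
    margA dA dB (cmat (fun k => (iA k, kB k)) (fun k => (jA k, mB k))) = cmat iA jA := by
  classical
  funext ab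
  simp only [margA, cmat]
  have hset : ∀ p : Fin dB × Fin dB,
      (univ.filter fun k => (iA k, kB k) = (ab.1, p.1) ∧ (jA k, mB k) = (ab.2, p.2))
        = (univ.filter fun k => iA k = ab.1 ∧ jA k = ab.2).filter
            fun k => (kB k, mB k) = p := by
    intro p
    rw [Finset.filter_filter]
    apply Finset.filter_congr
    intro k _
    simp only [Prod.ext_iff]
    tauto
  rw [Finset.sum_congr rfl fun p _ => congrArg Finset.card (hset p)]
  rw [Finset.sum_card_fiberwise_eq_card_filter]
  simp

lemma margB_cmat (iA jA : Fin n → Fin dA) (kB mB : Fin n → Fin dB) :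
    margB dA dB (cmat (fun k => (iA k, kB k)) (fun k => (jA k, mB k))) = cmat kB mB := by
  classical
  funext ab
  simp only [margB, cmat]
  have hset : ∀ p : Fin dA × Fin dA,
      (univ.filter fun k => (iA k, kB k) = (p.1, ab.1) ∧ (jA k, mB k) = (p.2, ab.2))
        = (univ.filter fun k => kB k = ab.1 ∧ mB k = ab.2).filter
            fun k => (iA k, jA k) = p := by
    intro p
    rw [Finset.filter_filter]
    apply Finset.filter_congr
    intro k _
    simp only [Prod.ext_iff]
    tauto
  rw [Finset.sum_congr rfl fun p _ => congrArg Finset.card (hset p)]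
  rw [Finset.sum_card_fiberwise_eq_card_filter]
  simp

lemma cmat_pair_iff (iA jA : Fin n → Fin dA) (g : Fin n → Fin dB × Fin dB)
    (E : (Fin dA × Fin dB) × (Fin dA × Fin dB) → ℕ) :
    cmat (fun k => (iA k, (g k).1)) (fun k => (jA k, (g k).2)) = E ↔
      ∀ (b : Fin dA × Fin dA) (p : Fin dB × Fin dB),
        (univ.filter fun k => (iA k, jA k) = b ∧ g k = p).card = E ((b.1, p.1), (b.2, p.2)) := by
  classical
  constructor
  · intro hq b p
    have h := congrFun hq ((b.1, p.1), (b.2, p.2))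
    rw [← h]
    simp only [cmat]
    congr 1
    apply Finset.filter_congr
    intro k _
    simp only [Prod.ext_iff]
    tauto
  · intro hbp
    funext q
    have h := hbp (q.1.1, q.2.1) (q.1.2, q.2.2)
    simp only at h
    rw [show ((((q.1.1 : Fin dA), (q.1.2 : Fin dB)), ((q.2.1 : Fin dA), (q.2.2 : Fin dB)))
        : (Fin dA × Fin dB) × (Fin dA × Fin dB)) = q from rfl] at h
    rw [← h]
    simp only [cmat]
    congr 1
    apply Finset.filter_congr
    intro k _
    simp only [Prod.ext_iff]
    tauto

end Marginals

section MainCount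

variable {n dA dB : ℕ}

set_option maxHeartbeats 1000000 in
lemma card_cmat_filter (iA jA : Fin n → Fin dA)
    (E : (Fin dA × Fin dB) × (Fin dA × Fin dB) → ℕ)
    (hEA : cmat iA jA = margA dA dB E) :
    (univ.filter fun g : Fin n → Fin dB × Fin dB =>
        cmat (fun k => (iA k, (g k).1)) (fun k => (jA k, (g k).2)) = E).card
      = ∏ b : Fin dA × Fin dA,
          Nat.multinomial univ fun p : Fin dB × Fin dB => E ((b.1, p.1), (b.2, p.2)) := by
  classical
  rw [Finset.filter_congr fun g _ => cmat_pair_iff iA jA g E]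
  have hc : ∀ b : Fin dA × Fin dA,
      ∑ p : Fin dB × Fin dB, E ((b.1, p.1), (b.2, p.2))
        = (univ.filter fun k => (fun k => (iA k, jA k)) k = b).card := by
    intro b
    have h1 : ∑ p : Fin dB × Fin dB, E ((b.1, p.1), (b.2, p.2)) = margA dA dB E b := rfl
    rw [h1, ← hEA]
    simp only [cmat]
    congr 1
    apply Finset.filter_congr
    intro k _
    simp [Prod.ext_iff]
  have hcf := count_fiberwise (fun k => (iA k, jA k))
    (fun (b : Fin dA × Fin dA) (p : Fin dB × Fin dB) => E ((b.1, p.1), (b.2, p.2))) hc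
  exact hcf

lemma card_cmat_filter_zero (iA jA : Fin n → Fin dA)
    (E : (Fin dA × Fin dB) × (Fin dA × Fin dB) → ℕ)
    (hEA : cmat iA jA ≠ margA dA dB E) :
    (univ.filter fun g : Fin n → Fin dB × Fin dB =>
        cmat (fun k => (iA k, (g k).1)) (fun k => (jA k, (g k).2)) = E).card = 0 := by
  classical
  rw [Finset.card_eq_zero]
  rw [Finset.filter_eq_empty_iff]
  intro g _ hg
  apply hEA
  have h := margA_cmat iA jA (fun k => (g k).1) (fun k => (g k).2)
  rw [← h, hg]

end MainCount

open Finset in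
set_option maxHeartbeats 1000000 in
lemma entry_eq {n dA dB : ℕ} (E : (Fin dA × Fin dB) × (Fin dA × Fin dB) → ℕ)
    (F : Fin dB × Fin dB → ℕ) (iA jA : Fin n → Fin dA) :
    ptraceB n dA dB
        (orbMat n (Fin dA × Fin dB) E *
          kronAB n dA dB (1 : Matrix (Fin n → Fin dA) (Fin n → Fin dA) ℂ)
            (orbMat n (Fin dB) F)ᵀ) iA jA
      = ∑ kB : Fin n → Fin dB, ∑ mB : Fin n → Fin dB,
          (if cmat (fun k => (iA k, kB k)) (fun k => (jA k, mB k)) = E then (1 : ℂ) else 0) *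
          (if cmat kB mB = F then (1 : ℂ) else 0) := by
  classical
  simp only [ptraceB, Matrix.of_apply, Matrix.mul_apply, kronAB, orbMat,
    Matrix.transpose_apply, Matrix.one_apply]
  refine Finset.sum_congr rfl fun kB _ => ?_
  rw [← Equiv.sum_comp (Equiv.arrowProdEquivProdArrow (Fin n) (fun _ => Fin dA) (fun _ => Fin dB)).symm]
  rw [Fintype.sum_prod_type]
  simp only [Equiv.arrowProdEquivProdArrow, Equiv.coe_fn_symm_mk]
  rw [Finset.sum_comm]
  refine Finset.sum_congr rfl fun mB _ => ?_
  rw [Finset.sum_eq_single jA]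
  · by_cases h1 : cmat kB mB = F <;>
      by_cases h2 : cmat (fun k => (iA k, kB k)) (fun k => (jA k, mB k)) = E <;> simp_all
  · intro mA _ hne
    simp [hne]
  · simp

end PtraceAux

open Classical in
/-- `Tr_{B^n} [ C_E · (1_{A^n} ⊗ (C_F)ᵀ) ]` equals `κ · C_{E_A}` if `F = E_B` and `0`
otherwise, where
`κ = ∏_{(a_A,b_A)} (E_A (a_A,b_A))! / ∏_{(a_B,b_B)} (E ((a_A,a_B),(b_A,b_B)))!`. -/
theorem ptraceB_orbMat_mul (n dA dB : ℕ) (hdA : 1 ≤ dA) (hdB : 1 ≤ dB)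
    (E : (Fin dA × Fin dB) × (Fin dA × Fin dB) → ℕ) (hE : ∑ vw, E vw = n)
    (F : Fin dB × Fin dB → ℕ) (hF : ∑ ab, F ab = n) :
    ptraceB n dA dB
        (orbMat n (Fin dA × Fin dB) E *
          kronAB n dA dB (1 : Matrix (Fin n → Fin dA) (Fin n → Fin dA) ℂ)
            (orbMat n (Fin dB) F)ᵀ) =
      if F = margB dA dB E then
        (∏ ab : Fin dA × Fin dA,
            ((margA dA dB E ab).factorial : ℂ) /
              ∏ p : Fin dB × Fin dB, ((E ((ab.1, p.1), (ab.2, p.2))).factorial : ℂ)) •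
          orbMat n (Fin dA) (margA dA dB E)
      else 0 := by
  classical
  ext iA jA
  rw [PtraceAux.entry_eq E F iA jA]
  by_cases hFE : F = margB dA dB E
  · rw [if_pos hFE]
    -- drop the second indicator
    have step1 : ∑ kB : Fin n → Fin dB, ∑ mB : Fin n → Fin dB,
        (if cmat (fun k => (iA k, kB k)) (fun k => (jA k, mB k)) = E then (1 : ℂ) else 0) *
          (if cmat kB mB = F then (1 : ℂ) else 0)
        = ∑ kB : Fin n → Fin dB, ∑ mB : Fin n → Fin dB,
            (if cmat (fun k => (iA k, kB k)) (fun k => (jA k, mB k)) = E then (1 : ℂ) else 0) := by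
      refine Finset.sum_congr rfl fun kB _ => Finset.sum_congr rfl fun mB _ => ?_
      by_cases hP : cmat (fun k => (iA k, kB k)) (fun k => (jA k, mB k)) = E
      · have hQ : cmat kB mB = F := by
          rw [hFE, ← hP, PtraceAux.margB_cmat]
        simp [hP, hQ]
      · simp [hP]
    rw [step1]
    -- turn the double sum into a count over pair functions
    have step2 : ∑ kB : Fin n → Fin dB, ∑ mB : Fin n → Fin dB,
        (if cmat (fun k => (iA k, kB k)) (fun k => (jA k, mB k)) = E then (1 : ℂ) else 0)
        = ((Finset.univ.filter fun g : Fin n → Fin dB × Fin dB =>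
            cmat (fun k => (iA k, (g k).1)) (fun k => (jA k, (g k).2)) = E).card : ℂ) := by
      rw [← Fintype.sum_prod_type']
      rw [← Equiv.sum_comp (Equiv.arrowProdEquivProdArrow (Fin n) (fun _ => Fin dB) (fun _ => Fin dB))]
      simp only [Equiv.arrowProdEquivProdArrow, Equiv.coe_fn_mk]
      exact Finset.sum_boole _ _
    rw [step2]
    rw [Matrix.smul_apply, orbMat, Matrix.of_apply]
    by_cases hA : cmat iA jA = margA dA dB E
    · rw [PtraceAux.card_cmat_filter iA jA E hA, if_pos hA]
      rw [smul_eq_mul, mul_one]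
      push_cast
      refine Finset.prod_congr rfl fun b _ => ?_
      have hspec := Nat.multinomial_spec Finset.univ
        (fun p : Fin dB × Fin dB => E ((b.1, p.1), (b.2, p.2)))
      have hsum : ∑ p : Fin dB × Fin dB, E ((b.1, p.1), (b.2, p.2)) = margA dA dB E b := rfl
      rw [hsum] at hspec
      have hne : (∏ p : Fin dB × Fin dB, ((E ((b.1, p.1), (b.2, p.2))).factorial : ℂ)) ≠ 0 :=
        Finset.prod_ne_zero_iff.mpr fun p _ =>
          Nat.cast_ne_zero.mpr (Nat.factorial_ne_zero _)
      rw [eq_comm, div_eq_iff hne]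
      exact_mod_cast (congrArg (Nat.cast : ℕ → ℂ) ((mul_comm _ _).trans hspec)).symm
    · rw [PtraceAux.card_cmat_filter_zero iA jA E hA, if_neg hA]
      simp
  · rw [if_neg hFE]
    rw [Matrix.zero_apply]
    refine Finset.sum_eq_zero fun kB _ => Finset.sum_eq_zero fun mB _ => ?_
    by_cases hP : cmat (fun k => (iA k, kB k)) (fun k => (jA k, mB k)) = E
    · have hQ : cmat kB mB ≠ F := by
        rw [← hP, PtraceAux.margB_cmat] at hFE
        exact fun h => hFE h.symm
      simp [hQ]
    · simp [hP]
end

section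
/- Fix d_A, d_B, d_C ≥ 1 and n. Let E_s be an AB-count matrix and E_u a BC-count matrix, both of total sum n. Then Tr_{B^n} [ ((C_{E_s})^{T_B} ⊗ 1_{C^n}) · (1_{A^n} ⊗ C_{E_u}) ] = ∑_{E_w} K(E_s, E_u, E_w) · C_{E_w}, where the sum is over all AC-count matrices E_w of total sum n, and K(E_s, E_u, E_w) := ∑_{E_z} [s(z)^{T_B} = E_s] · [u(z)^{T_B} = E_u] · [w(z) = E_w] · ∏_{a_A, b_A, a_C, b_C} [ (E_w ((a_A, a_C), (b_A, b_C)))! / ∏_{a_B, b_B} (E_z ((a_A, a_B, a_C), (b_A, b_B, b_C)))! ], the outer sum ranging over tripartite count matrices E_z of total sum n. -/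
open scoped BigOperators
open Matrix

/-- The finite set of all count matrices of total sum `n`. -/
noncomputable def countMats (n : ℕ) (σ : Type*) [Fintype σ] [DecidableEq σ] :
    Finset (σ × σ → ℕ) :=
  Set.Finite.toFinset (s := {E : σ × σ → ℕ | ∑ ab, E ab = n}) (by
    refine Set.Finite.subset (Set.finite_Icc (0 : σ × σ → ℕ) (fun _ => n)) ?_
    intro E hE
    simp only [Set.mem_setOf_eq] at hE
    refine Set.mem_Icc.mpr ⟨Pi.le_def.mpr fun ab => Nat.zero_le _, Pi.le_def.mpr fun ab => ?_⟩
    calc E ab ≤ ∑ x, E x :=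
          Finset.single_le_sum (fun x _ => Nat.zero_le _) (Finset.mem_univ ab)
      _ = n := hE)

/-- Partial transpose over `B^n` of a matrix indexed by `AB` multi-indices. -/
def ptransposeB (n dA dB : ℕ)
    (X : Matrix (Fin n → Fin dA × Fin dB) (Fin n → Fin dA × Fin dB) ℂ) :
    Matrix (Fin n → Fin dA × Fin dB) (Fin n → Fin dA × Fin dB) ℂ :=
  Matrix.of fun i j => X (fun k => ((i k).1, (j k).2)) (fun k => ((j k).1, (i k).2))

/-- The `AB`-marginal `s(z)` of a tripartite count matrix. -/
def margS (dA dB dC : ℕ)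
    (Ez : (Fin dA × Fin dB × Fin dC) × (Fin dA × Fin dB × Fin dC) → ℕ) :
    (Fin dA × Fin dB) × (Fin dA × Fin dB) → ℕ :=
  fun vw => ∑ cc : Fin dC × Fin dC,
    Ez ((vw.1.1, vw.1.2, cc.1), (vw.2.1, vw.2.2, cc.2))

/-- The `BC`-marginal `u(z)` of a tripartite count matrix. -/
def margU (dA dB dC : ℕ)
    (Ez : (Fin dA × Fin dB × Fin dC) × (Fin dA × Fin dB × Fin dC) → ℕ) :
    (Fin dB × Fin dC) × (Fin dB × Fin dC) → ℕ :=
  fun vw => ∑ aa : Fin dA × Fin dA,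
    Ez ((aa.1, vw.1.1, vw.1.2), (aa.2, vw.2.1, vw.2.2))

/-- The `AC`-marginal `w(z)` of a tripartite count matrix. -/
def margW (dA dB dC : ℕ)
    (Ez : (Fin dA × Fin dB × Fin dC) × (Fin dA × Fin dB × Fin dC) → ℕ) :
    (Fin dA × Fin dC) × (Fin dA × Fin dC) → ℕ :=
  fun vw => ∑ bb : Fin dB × Fin dB,
    Ez ((vw.1.1, bb.1, vw.1.2), (vw.2.1, bb.2, vw.2.2))

/-- Partial transpose over `B` of an `AB` count matrix. -/
def ctransB_AB (dA dB : ℕ) (E : (Fin dA × Fin dB) × (Fin dA × Fin dB) → ℕ) :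
    (Fin dA × Fin dB) × (Fin dA × Fin dB) → ℕ :=
  fun vw => E ((vw.1.1, vw.2.2), (vw.2.1, vw.1.2))

/-- Partial transpose over `B` of a `BC` count matrix. -/
def ctransB_BC (dB dC : ℕ) (E : (Fin dB × Fin dC) × (Fin dB × Fin dC) → ℕ) :
    (Fin dB × Fin dC) × (Fin dB × Fin dC) → ℕ :=
  fun vw => E ((vw.2.1, vw.1.2), (vw.1.1, vw.2.2))

/-- The partial trace over `B^n` of a matrix indexed by tripartite multi-indices, yielding a
matrix indexed by `AC` multi-indices. -/
noncomputable def ptraceB3 (n dA dB dC : ℕ)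
    (X : Matrix (Fin n → Fin dA × Fin dB × Fin dC) (Fin n → Fin dA × Fin dB × Fin dC) ℂ) :
    Matrix (Fin n → Fin dA × Fin dC) (Fin n → Fin dA × Fin dC) ℂ :=
  Matrix.of fun i j => ∑ kB : Fin n → Fin dB,
    X (fun k => ((i k).1, kB k, (i k).2)) (fun k => ((j k).1, kB k, (j k).2))

/-- The combinatorial coefficient `K(E_s, E_u, E_w)` counting compatible intermediate
`B`-system configurations. -/
noncomputable def Kcoef (n dA dB dC : ℕ)
    (Es : (Fin dA × Fin dB) × (Fin dA × Fin dB) → ℕ)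
    (Eu : (Fin dB × Fin dC) × (Fin dB × Fin dC) → ℕ)
    (Ew : (Fin dA × Fin dC) × (Fin dA × Fin dC) → ℕ) : ℂ :=
  ∑ Ez ∈ countMats n (Fin dA × Fin dB × Fin dC),
    (if ctransB_AB dA dB (margS dA dB dC Ez) = Es then (1 : ℂ) else 0) *
    (if ctransB_BC dB dC (margU dA dB dC Ez) = Eu then (1 : ℂ) else 0) *
    (if margW dA dB dC Ez = Ew then (1 : ℂ) else 0) *
    ∏ q : (Fin dA × Fin dC) × (Fin dA × Fin dC),
      ((Ew q).factorial : ℂ) /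
        ∏ bb : Fin dB × Fin dB,
          ((Ez ((q.1.1, bb.1, q.1.2), (q.2.1, bb.2, q.2.2))).factorial : ℂ)

namespace PtBhelp
open Finset


lemma sum_card_filter_fiber {ι γ : Type*} [DecidableEq ι] [Fintype γ] [DecidableEq γ]
    (s : Finset ι) (P : ι → Prop) [DecidablePred P] (h : ι → γ) :
    ∑ c : γ, (s.filter fun k => P k ∧ h k = c).card = (s.filter fun k => P k).card := by
  rw [Finset.card_eq_sum_card_fiberwise (f := h) (t := univ) (fun x _ => mem_univ (h x))]
  refine Finset.sum_congr rfl fun c _ => ?_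
  rw [Finset.filter_filter]

lemma core_count_aux {ι α β : Type*} [Fintype ι] [DecidableEq ι] [Fintype α] [DecidableEq α]
    [Fintype β] [DecidableEq β] [Inhabited β]
    (f : ι → α) (s : Finset ι) (c : α × β → ℕ)
    (hc : ∀ a, ∑ b, c (a, b) = (s.filter fun k => f k = a).card) :
    (Finset.univ.filter fun g : ι → β =>
        (∀ k ∉ s, g k = default) ∧
        ∀ p : α × β, (s.filter fun k => f k = p.1 ∧ g k = p.2).card = c p).card
      * ∏ p, (c p).factorial
    = ∏ a, ((s.filter fun k => f k = a).card).factorial := by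
  induction s using Finset.induction_on generalizing c with
  | empty =>
    have hc0 : ∀ p : α × β, c p = 0 := by
      intro p
      have := hc p.1
      simp only [Finset.filter_empty, Finset.card_empty] at this
      have := Finset.sum_eq_zero_iff.mp this p.2 (mem_univ _)
      simpa using this
    have hset : (Finset.univ.filter fun g : ι → β =>
        (∀ k ∉ (∅ : Finset ι), g k = default) ∧
        ∀ p : α × β, ((∅ : Finset ι).filter fun k => f k = p.1 ∧ g k = p.2).card = c p)
        = {fun _ => default} := by
      ext g
      simp only [Finset.mem_filter, mem_univ, true_and, Finset.filter_empty,
        Finset.card_empty, Finset.mem_singleton]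
      constructor
      · rintro ⟨h1, _⟩
        funext k
        exact h1 k (by simp)
      · rintro rfl
        exact ⟨fun _ _ => rfl, fun p => (hc0 p).symm⟩
    rw [hset]
    simp [hc0]
  | @insert k0 s' hk0 ih =>
    set a0 := f k0 with ha0
    -- fiberwise decomposition over the value of g at k0
    set S := (Finset.univ.filter fun g : ι → β =>
        (∀ k ∉ insert k0 s', g k = default) ∧
        ∀ p : α × β, ((insert k0 s').filter fun k => f k = p.1 ∧ g k = p.2).card = c p)
      with hS
    have hcard : S.card = ∑ b : β, (S.filter fun g => g k0 = b).card :=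
      Finset.card_eq_sum_card_fiberwise (fun g _ => mem_univ (g k0))
    -- the per-value fibers
    have hfiber : ∀ b : β, (S.filter fun g => g k0 = b).card =
        if c (a0, b) = 0 then 0 else
          (Finset.univ.filter fun g : ι → β =>
            (∀ k ∉ s', g k = default) ∧
            ∀ p : α × β, (s'.filter fun k => f k = p.1 ∧ g k = p.2).card
              = Function.update c (a0, b) (c (a0, b) - 1) p).card := by
      intro b
      by_cases hb : c (a0, b) = 0
      · simp only [hb, if_pos]
        rw [Finset.card_eq_zero]
        rw [Finset.eq_empty_iff_forall_notMem]
        intro g hg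
        simp only [hS, Finset.mem_filter, mem_univ, true_and] at hg
        obtain ⟨⟨-, h2⟩, h3⟩ := hg
        have := h2 (a0, b)
        rw [hb] at this
        rw [Finset.card_eq_zero, Finset.eq_empty_iff_forall_notMem] at this
        exact this k0 (by simp [h3, ha0])
      · simp only [hb, if_neg, if_false]
        set cb := Function.update c (a0, b) (c (a0, b) - 1) with hcb
        refine Finset.card_bij' (fun g _ => Function.update g k0 default)
          (fun g' _ => Function.update g' k0 b) ?_ ?_ ?_ ?_
        · -- forward membership
          intro g hg
          simp only [hS, Finset.mem_filter, mem_univ, true_and] at hg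
          obtain ⟨⟨h1, h2⟩, h3⟩ := hg
          simp only [Finset.mem_filter, mem_univ, true_and]
          constructor
          · intro k hk
            by_cases hkk : k = k0
            · subst hkk; simp [Function.update_self]
            · rw [Function.update_of_ne hkk]
              exact h1 k (by simp [hkk, hk])
          · intro p
            have heqf : (s'.filter fun k => f k = p.1 ∧ Function.update g k0 default k = p.2)
                = s'.filter fun k => f k = p.1 ∧ g k = p.2 := by
              apply Finset.filter_congr
              intro k hk
              have : k ≠ k0 := fun h => hk0 (h ▸ hk)
              rw [Function.update_of_ne this]
            rw [heqf]
            have hins := h2 p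
            rw [Finset.filter_insert] at hins
            by_cases hp : p = (a0, b)
            · subst hp
              rw [if_pos ⟨rfl, h3⟩] at hins
              rw [Finset.card_insert_of_notMem (fun h => hk0 (Finset.mem_of_mem_filter _ h))]
                at hins
              rw [hcb, Function.update_self]
              exact Nat.eq_sub_of_add_eq hins
            · have hnp : ¬ (f k0 = p.1 ∧ g k0 = p.2) := by
                rintro ⟨hh1, hh2⟩
                exact hp (by rw [Prod.ext_iff]; exact ⟨hh1.symm, by rw [← hh2, h3]⟩)
              rw [if_neg hnp] at hins
              rw [hcb, Function.update_of_ne hp, hins]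
        · -- backward membership
          intro g' hg'
          simp only [Finset.mem_filter, mem_univ, true_and] at hg'
          obtain ⟨h1, h2⟩ := hg'
          simp only [hS, Finset.mem_filter, mem_univ, true_and]
          refine ⟨⟨?_, ?_⟩, Function.update_self _ _ _⟩
          · intro k hk
            simp only [Finset.mem_insert, not_or] at hk
            rw [Function.update_of_ne hk.1]
            exact h1 k hk.2
          · intro p
            have heqf : (s'.filter fun k => f k = p.1 ∧ Function.update g' k0 b k = p.2)
                = s'.filter fun k => f k = p.1 ∧ g' k = p.2 := by
              apply Finset.filter_congr
              intro k hk
              have : k ≠ k0 := fun h => hk0 (h ▸ hk)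
              rw [Function.update_of_ne this]
            rw [Finset.filter_insert]
            by_cases hp : p = (a0, b)
            · subst hp
              rw [if_pos ⟨rfl, Function.update_self _ _ _⟩]
              rw [Finset.card_insert_of_notMem (fun h => hk0 (Finset.mem_of_mem_filter _ h))]
              rw [heqf, h2, hcb, Function.update_self]
              exact Nat.succ_pred_eq_of_pos (Nat.pos_of_ne_zero hb)
            · have hnp : ¬ (f k0 = p.1 ∧ Function.update g' k0 b k0 = p.2) := by
                rw [Function.update_self]
                rintro ⟨hh1, hh2⟩
                exact hp (by rw [Prod.ext_iff]; exact ⟨hh1.symm, hh2.symm⟩)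
              rw [if_neg hnp, heqf, h2, hcb, Function.update_of_ne hp]
        · -- left inverse
          intro g hg
          simp only [Finset.mem_filter] at hg
          simp only [Function.update_idem]
          rw [← hg.2]
          exact Function.update_eq_self _ _
        · -- right inverse
          intro g' hg'
          simp only [Finset.mem_filter, mem_univ, true_and] at hg'
          simp only [Function.update_idem]
          rw [← hg'.1 k0 hk0]
          exact Function.update_eq_self _ _
    -- notation
    set m : α → ℕ := fun a => (s'.filter fun k => f k = a).card with hm
    have hMa : ∀ a, ((insert k0 s').filter fun k => f k = a).card
        = m a + (if a = a0 then 1 else 0) := by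
      intro a
      rw [Finset.filter_insert]
      by_cases ha : a = a0
      · have hfa : f k0 = a := by rw [ha]
        rw [if_pos hfa, if_pos ha,
          Finset.card_insert_of_notMem (fun h => hk0 (Finset.mem_of_mem_filter _ h))]
      · have hfa : ¬ f k0 = a := fun h => ha (ha0.trans h).symm
        rw [if_neg hfa, if_neg ha, add_zero]
    -- per-b term identity
    have hterm : ∀ b : β,
        (if c (a0, b) = 0 then 0 else
          (Finset.univ.filter fun g : ι → β =>
            (∀ k ∉ s', g k = default) ∧
            ∀ p : α × β, (s'.filter fun k => f k = p.1 ∧ g k = p.2).card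
              = Function.update c (a0, b) (c (a0, b) - 1) p).card) * ∏ p, (c p).factorial
        = c (a0, b) * ∏ a, (m a).factorial := by
      intro b
      by_cases hb : c (a0, b) = 0
      · rw [if_pos hb, hb, zero_mul, zero_mul]
      · rw [if_neg hb]
        set cb := Function.update c (a0, b) (c (a0, b) - 1) with hcb
        have hprod : ∏ p, (c p).factorial = c (a0, b) * ∏ p, (cb p).factorial := by
          rw [← Finset.mul_prod_erase Finset.univ (fun p => (c p).factorial)
            (Finset.mem_univ (a0, b)),
            ← Finset.mul_prod_erase Finset.univ (fun p => (cb p).factorial)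
            (Finset.mem_univ (a0, b))]
          have h1 : (c (a0, b)).factorial = c (a0, b) * (cb (a0, b)).factorial := by
            rw [hcb, Function.update_self]
            obtain ⟨t, ht⟩ := Nat.exists_eq_succ_of_ne_zero hb
            rw [ht]
            simp [Nat.factorial_succ]
          have h2 : ∏ p ∈ Finset.univ.erase (a0, b), (c p).factorial
              = ∏ p ∈ Finset.univ.erase (a0, b), (cb p).factorial := by
            refine Finset.prod_congr rfl fun p hp => ?_
            rw [hcb, Function.update_of_ne (Finset.ne_of_mem_erase hp)]
          rw [h1, h2, mul_assoc]
        have hyp_cb : ∀ a, ∑ b', cb (a, b') = m a := by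
          intro a
          by_cases ha : a = a0
          · subst ha
            have e1 : cb (a0, b) + ∑ b' ∈ Finset.univ.erase b, cb (a0, b')
                = ∑ b', cb (a0, b') := Finset.add_sum_erase _ (fun b' => cb (a0, b')) (Finset.mem_univ b)
            have e2 : c (a0, b) + ∑ b' ∈ Finset.univ.erase b, c (a0, b')
                = ∑ b', c (a0, b') := Finset.add_sum_erase _ (fun b' => c (a0, b')) (Finset.mem_univ b)
            have e3 : ∑ b' ∈ Finset.univ.erase b, cb (a0, b')
                = ∑ b' ∈ Finset.univ.erase b, c (a0, b') := by
              refine Finset.sum_congr rfl fun b' hb' => ?_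
              rw [hcb, Function.update_of_ne]
              intro h
              exact (Finset.ne_of_mem_erase hb') (congrArg Prod.snd h)
            have e4 : cb (a0, b) = c (a0, b) - 1 := by rw [hcb, Function.update_self]
            have e5 := hc a0
            rw [hMa a0, if_pos rfl] at e5
            have hb1 : 1 ≤ c (a0, b) := Nat.pos_of_ne_zero hb
            rw [← e1, e3, e4]
            rw [e5] at e2
            have h7 : c (a0, b) - 1 + ∑ b' ∈ Finset.univ.erase b, c (a0, b') + 1
                = m a0 + 1 := by
              rw [add_right_comm, Nat.sub_add_cancel hb1]
              exact e2
            exact Nat.add_right_cancel h7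
          · have e6 : ∀ b', cb (a, b') = c (a, b') := by
              intro b'
              rw [hcb, Function.update_of_ne]
              intro h
              exact ha (congrArg Prod.fst h)
            simp only [e6]
            have e5 := hc a
            rw [hMa a, if_neg ha, add_zero] at e5
            exact e5
        rw [hprod, ← mul_assoc, mul_comm _ (c (a0, b)), mul_assoc, ih cb hyp_cb]
    -- assemble
    rw [hcard, Finset.sum_mul]
    simp only [hfiber]
    rw [Finset.sum_congr rfl fun b _ => hterm b, ← Finset.sum_mul, hc a0, hMa a0, if_pos rfl]
    have hR : ∏ a, (((insert k0 s').filter fun k => f k = a).card).factorial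
        = (m a0 + 1).factorial * ∏ a ∈ Finset.univ.erase a0, (m a).factorial := by
      rw [← Finset.mul_prod_erase Finset.univ _ (Finset.mem_univ a0), hMa a0, if_pos rfl]
      congr 1
      refine Finset.prod_congr rfl fun a ha => ?_
      rw [hMa a, if_neg (Finset.ne_of_mem_erase ha), add_zero]
    rw [hR, ← Finset.mul_prod_erase Finset.univ (fun a => (m a).factorial)
      (Finset.mem_univ a0), Nat.factorial_succ, mul_assoc]

lemma core_count {ι α β : Type*} [Fintype ι] [DecidableEq ι] [Fintype α] [DecidableEq α]
    [Fintype β] [DecidableEq β] [Inhabited β]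
    (f : ι → α) (c : α × β → ℕ)
    (hc : ∀ a, ∑ b, c (a, b) = (Finset.univ.filter fun k => f k = a).card) :
    (Finset.univ.filter fun g : ι → β =>
        ∀ p : α × β, (Finset.univ.filter fun k => f k = p.1 ∧ g k = p.2).card = c p).card
      * ∏ p, (c p).factorial
    = ∏ a, ((Finset.univ.filter fun k => f k = a).card).factorial := by
  have h := core_count_aux f Finset.univ c hc
  have hset : (Finset.univ.filter fun g : ι → β =>
        ∀ p : α × β, (Finset.univ.filter fun k => f k = p.1 ∧ g k = p.2).card = c p)
      = (Finset.univ.filter fun g : ι → β =>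
        (∀ k ∉ (Finset.univ : Finset ι), g k = default) ∧
        ∀ p : α × β, (Finset.univ.filter fun k => f k = p.1 ∧ g k = p.2).card = c p) := by
    apply Finset.filter_congr
    intro g _
    simp
  rw [hset]
  exact h

lemma filter_card_congr {ι : Type*} (s : Finset ι) (P Q : ι → Prop)
    [DecidablePred P] [DecidablePred Q] (h : ∀ k, P k ↔ Q k) :
    (s.filter P).card = (s.filter Q).card := by
  congr 1
  apply Finset.filter_congr
  intro k _
  exact h k

end PtBhelp

namespace PtBhelp

lemma sum_cmat {n : ℕ} {σ : Type*} [Fintype σ] [DecidableEq σ] (i j : Fin n → σ) :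
    ∑ ab, cmat i j ab = n := by
  have h := Finset.card_eq_sum_card_fiberwise
    (s := (Finset.univ : Finset (Fin n))) (t := (Finset.univ : Finset (σ × σ)))
    (f := fun k => (i k, j k)) (fun x _ => Finset.mem_univ _)
  rw [Finset.card_univ, Fintype.card_fin] at h
  rw [show (∑ ab, cmat i j ab) = ∑ ab : σ × σ,
      (Finset.univ.filter fun k => (i k, j k) = ab).card from
    Finset.sum_congr rfl fun ab _ => filter_card_congr _ _ _
      (fun k => by simp [Prod.ext_iff])]
  exact h.symm

lemma mem_countMats {n : ℕ} {σ : Type*} [Fintype σ] [DecidableEq σ] (E : σ × σ → ℕ) :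
    E ∈ countMats n σ ↔ ∑ ab, E ab = n := by
  simp [countMats, Set.Finite.mem_toFinset]

/-- Equivalence splitting tripartite multi-indices into components. -/
def tripleE (n dA dB dC : ℕ) :
    (Fin n → Fin dA × Fin dB × Fin dC) ≃
      (Fin n → Fin dA) × (Fin n → Fin dB) × (Fin n → Fin dC) where
  toFun m := (fun k => (m k).1, fun k => (m k).2.1, fun k => (m k).2.2)
  invFun t := fun k => (t.1 k, t.2.1 k, t.2.2 k)
  left_inv _ := rfl
  right_inv _ := rfl

/-- Equivalence splitting pair multi-indices into components. -/
def pairE (n dB : ℕ) :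
    (Fin n → Fin dB × Fin dB) ≃ ((Fin n → Fin dB) × (Fin n → Fin dB)) where
  toFun g := (fun k => (g k).1, fun k => (g k).2)
  invFun t := fun k => (t.1 k, t.2 k)
  left_inv _ := rfl
  right_inv _ := rfl

lemma Fz_margS (n dA dB dC : ℕ) (i j : Fin n → Fin dA × Fin dC)
    (g : Fin n → Fin dB × Fin dB) :
    ctransB_AB dA dB (margS dA dB dC
      (cmat (fun k => ((i k).1, (g k).1, (i k).2)) (fun k => ((j k).1, (g k).2, (j k).2))))
    = cmat (fun k => ((i k).1, (g k).2)) (fun k => ((j k).1, (g k).1)) := by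
  funext vw
  obtain ⟨⟨aA, aB⟩, bA, bB⟩ := vw
  simp only [ctransB_AB, margS, cmat]
  rw [← sum_card_filter_fiber (Finset.univ)
    (fun k => ((i k).1, (g k).2) = (aA, aB) ∧ ((j k).1, (g k).1) = (bA, bB))
    (fun k => ((i k).2, (j k).2))]
  refine Finset.sum_congr rfl fun cc _ => filter_card_congr _ _ _ fun k => ?_
  simp only [Prod.mk.injEq, Prod.ext_iff]
  tauto

lemma Fz_margU (n dA dB dC : ℕ) (i j : Fin n → Fin dA × Fin dC)
    (g : Fin n → Fin dB × Fin dB) :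
    ctransB_BC dB dC (margU dA dB dC
      (cmat (fun k => ((i k).1, (g k).1, (i k).2)) (fun k => ((j k).1, (g k).2, (j k).2))))
    = cmat (fun k => ((g k).2, (i k).2)) (fun k => ((g k).1, (j k).2)) := by
  funext vw
  obtain ⟨⟨aB, aC⟩, bB, bC⟩ := vw
  simp only [ctransB_BC, margU, cmat]
  rw [← sum_card_filter_fiber (Finset.univ)
    (fun k => ((g k).2, (i k).2) = (aB, aC) ∧ ((g k).1, (j k).2) = (bB, bC))
    (fun k => ((i k).1, (j k).1))]
  refine Finset.sum_congr rfl fun aa _ => filter_card_congr _ _ _ fun k => ?_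
  simp only [Prod.mk.injEq, Prod.ext_iff]
  tauto

lemma Fz_margW (n dA dB dC : ℕ) (i j : Fin n → Fin dA × Fin dC)
    (g : Fin n → Fin dB × Fin dB) :
    margW dA dB dC
      (cmat (fun k => ((i k).1, (g k).1, (i k).2)) (fun k => ((j k).1, (g k).2, (j k).2)))
    = cmat i j := by
  funext vw
  obtain ⟨⟨aA, aC⟩, bA, bC⟩ := vw
  simp only [margW, cmat]
  rw [← sum_card_filter_fiber (Finset.univ)
    (fun k => i k = (aA, aC) ∧ j k = (bA, bC))
    (fun k => ((g k).1, (g k).2))]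
  refine Finset.sum_congr rfl fun bb _ => filter_card_congr _ _ _ fun k => ?_
  simp only [Prod.mk.injEq, Prod.ext_iff]
  tauto

lemma Fz_eq_iff (n dA dB dC : ℕ) (i j : Fin n → Fin dA × Fin dC)
    (g : Fin n → Fin dB × Fin dB)
    (Ez : (Fin dA × Fin dB × Fin dC) × (Fin dA × Fin dB × Fin dC) → ℕ) :
    (cmat (fun k => ((i k).1, (g k).1, (i k).2)) (fun k => ((j k).1, (g k).2, (j k).2)) = Ez)
    ↔ ∀ p : ((Fin dA × Fin dC) × (Fin dA × Fin dC)) × (Fin dB × Fin dB),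
        (Finset.univ.filter fun k => (i k, j k) = p.1 ∧ g k = p.2).card
          = Ez ((p.1.1.1, p.2.1, p.1.1.2), (p.1.2.1, p.2.2, p.1.2.2)) := by
  constructor
  · intro h p
    rw [← h]
    simp only [cmat]
    refine filter_card_congr _ _ _ fun k => ?_
    simp only [Prod.mk.injEq, Prod.ext_iff]
    tauto
  · intro h
    funext RC
    obtain ⟨⟨aA, aB, aC⟩, bA, bB, bC⟩ := RC
    have h2 := h (((aA, aC), (bA, bC)), (aB, bB))
    rw [← h2]
    simp only [cmat]
    refine filter_card_congr _ _ _ fun k => ?_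
    simp only [Prod.mk.injEq, Prod.ext_iff]
    tauto

set_option maxHeartbeats 1600000 in
lemma step1 (n dA dB dC : ℕ)
    (Es : (Fin dA × Fin dB) × (Fin dA × Fin dB) → ℕ)
    (Eu : (Fin dB × Fin dC) × (Fin dB × Fin dC) → ℕ)
    (i j : Fin n → Fin dA × Fin dC) (kB : Fin n → Fin dB) :
    ((Matrix.of fun i j : Fin n → Fin dA × Fin dB × Fin dC =>
        ptransposeB n dA dB (orbMat n (Fin dA × Fin dB) Es)
          (fun k => ((i k).1, (i k).2.1)) (fun k => ((j k).1, (j k).2.1)) *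
        (if (fun k => (i k).2.2) = (fun k : Fin n => (j k).2.2) then (1 : ℂ) else 0)) *
      (Matrix.of fun i j : Fin n → Fin dA × Fin dB × Fin dC =>
        (if (fun k => (i k).1) = (fun k : Fin n => (j k).1) then (1 : ℂ) else 0) *
        orbMat n (Fin dB × Fin dC) Eu
          (fun k => ((i k).2.1, (i k).2.2)) (fun k => ((j k).2.1, (j k).2.2))))
      (fun k => ((i k).1, kB k, (i k).2)) (fun k => ((j k).1, kB k, (j k).2))
    = ∑ mB : Fin n → Fin dB,
        (if cmat (fun k => ((i k).1, mB k)) (fun k => ((j k).1, kB k)) = Es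
          then (1 : ℂ) else 0) *
        (if cmat (fun k => (mB k, (i k).2)) (fun k => (kB k, (j k).2)) = Eu
          then (1 : ℂ) else 0) := by
  rw [Matrix.mul_apply]
  rw [← Equiv.sum_comp (tripleE n dA dB dC).symm]
  simp only [tripleE, Equiv.coe_fn_symm_mk, Matrix.of_apply, ptransposeB, orbMat]
  simp only [Fintype.sum_prod_type]
  rw [Fintype.sum_eq_single (fun k => (j k).1)]
  · refine Finset.sum_congr rfl fun mB _ => ?_
    rw [Fintype.sum_eq_single (fun k => (i k).2)]
    · simp
    · intro mC hmC
      simp [Ne.symm hmC]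
  · intro mA hmA
    refine Finset.sum_eq_zero fun mB _ => Finset.sum_eq_zero fun mC _ => ?_
    simp [hmA]

end PtBhelp

/-- Serial-concatenation partial-trace formula for permutation-covariant orbit matrices:
`Tr_{B^n} [ ((C_{E_s})^{T_B} ⊗ 1_{C^n}) · (1_{A^n} ⊗ C_{E_u}) ]
  = ∑_{E_w} K(E_s, E_u, E_w) · C_{E_w}`. -/
theorem ptraceB_covariant_concatenation (n dA dB dC : ℕ)
    (hdA : 1 ≤ dA) (hdB : 1 ≤ dB) (hdC : 1 ≤ dC)
    (Es : (Fin dA × Fin dB) × (Fin dA × Fin dB) → ℕ) (hEs : ∑ vw, Es vw = n)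
    (Eu : (Fin dB × Fin dC) × (Fin dB × Fin dC) → ℕ) (hEu : ∑ vw, Eu vw = n) :
    ptraceB3 n dA dB dC
        ((Matrix.of fun i j : Fin n → Fin dA × Fin dB × Fin dC =>
            ptransposeB n dA dB (orbMat n (Fin dA × Fin dB) Es)
              (fun k => ((i k).1, (i k).2.1)) (fun k => ((j k).1, (j k).2.1)) *
            (if (fun k => (i k).2.2) = (fun k : Fin n => (j k).2.2) then (1 : ℂ) else 0)) *
          (Matrix.of fun i j : Fin n → Fin dA × Fin dB × Fin dC =>
            (if (fun k => (i k).1) = (fun k : Fin n => (j k).1) then (1 : ℂ) else 0) *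
            orbMat n (Fin dB × Fin dC) Eu
              (fun k => ((i k).2.1, (i k).2.2)) (fun k => ((j k).2.1, (j k).2.2)))) =
      ∑ Ew ∈ countMats n (Fin dA × Fin dC),
        Kcoef n dA dB dC Es Eu Ew • orbMat n (Fin dA × Fin dC) Ew := by
  classical
  open PtBhelp in
  ext i j
  rw [Matrix.sum_apply]
  conv_lhs => simp only [ptraceB3, Matrix.of_apply]
  conv_rhs => simp only [Matrix.smul_apply, smul_eq_mul, orbMat, Matrix.of_apply]
  rw [Finset.sum_congr rfl fun kB _ => PtBhelp.step1 n dA dB dC Es Eu i j kB]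
  -- fold double sum into a single sum over pair-valued maps
  have h2 : (∑ kB : Fin n → Fin dB, ∑ mB : Fin n → Fin dB,
        (if cmat (fun k => ((i k).1, mB k)) (fun k => ((j k).1, kB k)) = Es
          then (1 : ℂ) else 0) *
        (if cmat (fun k => (mB k, (i k).2)) (fun k => (kB k, (j k).2)) = Eu
          then (1 : ℂ) else 0))
      = ∑ g : Fin n → Fin dB × Fin dB,
        (if cmat (fun k => ((i k).1, (g k).2)) (fun k => ((j k).1, (g k).1)) = Es
          then (1 : ℂ) else 0) *
        (if cmat (fun k => ((g k).2, (i k).2)) (fun k => ((g k).1, (j k).2)) = Eu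
          then (1 : ℂ) else 0) := by
    exact (Fintype.sum_prod_type (fun t : (Fin n → Fin dB) × (Fin n → Fin dB) =>
        (if cmat (fun k => ((i k).1, t.2 k)) (fun k => ((j k).1, t.1 k)) = Es
          then (1 : ℂ) else 0) *
        (if cmat (fun k => (t.2 k, (i k).2)) (fun k => (t.1 k, (j k).2)) = Eu
          then (1 : ℂ) else 0))).symm.trans
      (Equiv.sum_comp (PtBhelp.pairE n dB) _).symm
  rw [h2]
  haveI : Inhabited (Fin dB × Fin dB) :=
    ⟨(⟨0, hdB⟩, ⟨0, hdB⟩)⟩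
  -- expand each summand as a sum over tripartite count matrices
  have key : ∀ g : Fin n → Fin dB × Fin dB,
      (if cmat (fun k => ((i k).1, (g k).2)) (fun k => ((j k).1, (g k).1)) = Es
        then (1 : ℂ) else 0) *
      (if cmat (fun k => ((g k).2, (i k).2)) (fun k => ((g k).1, (j k).2)) = Eu
        then (1 : ℂ) else 0)
      = ∑ Ez ∈ countMats n (Fin dA × Fin dB × Fin dC),
          (if cmat (fun k => ((i k).1, (g k).1, (i k).2))
              (fun k => ((j k).1, (g k).2, (j k).2)) = Ez then (1 : ℂ) else 0) *
          ((if ctransB_AB dA dB (margS dA dB dC Ez) = Es then (1 : ℂ) else 0) *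
           (if ctransB_BC dB dC (margU dA dB dC Ez) = Eu then (1 : ℂ) else 0)) := by
    intro g
    rw [← PtBhelp.Fz_margS n dA dB dC i j g, ← PtBhelp.Fz_margU n dA dB dC i j g]
    simp only [ite_mul, one_mul, zero_mul]
    rw [Finset.sum_ite_eq, if_pos ((PtBhelp.mem_countMats _).2 (PtBhelp.sum_cmat _ _))]
  rw [Finset.sum_congr rfl fun g _ => key g, Finset.sum_comm]
  -- collapse the sum over Ew on the right
  have h3 : (∑ Ew ∈ countMats n (Fin dA × Fin dC),
        Kcoef n dA dB dC Es Eu Ew * (if cmat i j = Ew then (1 : ℂ) else 0))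
      = Kcoef n dA dB dC Es Eu (cmat i j) := by
    simp only [mul_ite, mul_one, mul_zero]
    rw [Finset.sum_ite_eq, if_pos ((PtBhelp.mem_countMats _).2 (PtBhelp.sum_cmat _ _))]
  rw [h3]
  simp only [Kcoef]
  refine Finset.sum_congr rfl fun Ez hEz => ?_
  rw [← Finset.sum_mul, Finset.sum_boole]
  have hcard : ((Finset.univ.filter fun g : Fin n → Fin dB × Fin dB =>
        cmat (fun k => ((i k).1, (g k).1, (i k).2))
          (fun k => ((j k).1, (g k).2, (j k).2)) = Ez).card : ℂ)
      = (if margW dA dB dC Ez = cmat i j then (1 : ℂ) else 0) *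
        ∏ q : (Fin dA × Fin dC) × (Fin dA × Fin dC),
          ((cmat i j q).factorial : ℂ) /
            ∏ bb : Fin dB × Fin dB,
              ((Ez ((q.1.1, bb.1, q.1.2), (q.2.1, bb.2, q.2.2))).factorial : ℂ) := by
    by_cases hW : margW dA dB dC Ez = cmat i j
    · rw [if_pos hW, one_mul]
      have hc' : ∀ q : (Fin dA × Fin dC) × (Fin dA × Fin dC),
          ∑ bb : Fin dB × Fin dB, Ez ((q.1.1, bb.1, q.1.2), (q.2.1, bb.2, q.2.2))
          = (Finset.univ.filter fun k => (i k, j k) = q).card := by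
        intro q
        have h4 : margW dA dB dC Ez q = cmat i j q := by rw [hW]
        simp only [margW] at h4
        rw [h4]
        simp only [cmat]
        exact PtBhelp.filter_card_congr _ _ _ fun k => by simp [Prod.ext_iff]
      have hcore := PtBhelp.core_count (f := fun k : Fin n => (i k, j k))
        (c := fun p : ((Fin dA × Fin dC) × (Fin dA × Fin dC)) × (Fin dB × Fin dB) =>
          Ez ((p.1.1.1, p.2.1, p.1.1.2), (p.1.2.1, p.2.2, p.1.2.2))) hc'
      have hsets : (Finset.univ.filter fun g : Fin n → Fin dB × Fin dB =>
            ∀ p : ((Fin dA × Fin dC) × (Fin dA × Fin dC)) × (Fin dB × Fin dB),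
              (Finset.univ.filter fun k => (i k, j k) = p.1 ∧ g k = p.2).card
                = Ez ((p.1.1.1, p.2.1, p.1.1.2), (p.1.2.1, p.2.2, p.1.2.2))).card
          = (Finset.univ.filter fun g : Fin n → Fin dB × Fin dB =>
              cmat (fun k => ((i k).1, (g k).1, (i k).2))
                (fun k => ((j k).1, (g k).2, (j k).2)) = Ez).card :=
        PtBhelp.filter_card_congr _ _ _ fun g =>
          (PtBhelp.Fz_eq_iff n dA dB dC i j g Ez).symm
      have hprodc : (∏ p : (((Fin dA × Fin dC) × (Fin dA × Fin dC)) × (Fin dB × Fin dB)),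
            (Ez ((p.1.1.1, p.2.1, p.1.1.2), (p.1.2.1, p.2.2, p.1.2.2))).factorial)
          = ∏ q : (Fin dA × Fin dC) × (Fin dA × Fin dC), ∏ bb : Fin dB × Fin dB,
              (Ez ((q.1.1, bb.1, q.1.2), (q.2.1, bb.2, q.2.2))).factorial := by
        rw [Fintype.prod_prod_type]
      have hprodr : (∏ q : (Fin dA × Fin dC) × (Fin dA × Fin dC),
            ((Finset.univ.filter fun k => (i k, j k) = q).card).factorial)
          = ∏ q : (Fin dA × Fin dC) × (Fin dA × Fin dC), (cmat i j q).factorial := by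
        refine Finset.prod_congr rfl fun q _ => ?_
        congr 1
        simp only [cmat]
        exact PtBhelp.filter_card_congr _ _ _ fun k => by simp [Prod.ext_iff]
      have hNat : (Finset.univ.filter fun g : Fin n → Fin dB × Fin dB =>
            cmat (fun k => ((i k).1, (g k).1, (i k).2))
              (fun k => ((j k).1, (g k).2, (j k).2)) = Ez).card
          * ∏ q : (Fin dA × Fin dC) × (Fin dA × Fin dC), ∏ bb : Fin dB × Fin dB,
              (Ez ((q.1.1, bb.1, q.1.2), (q.2.1, bb.2, q.2.2))).factorial
          = ∏ q : (Fin dA × Fin dC) × (Fin dA × Fin dC), (cmat i j q).factorial := by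
        rw [← hsets, ← hprodc, ← hprodr]
        exact hcore
      rw [Finset.prod_div_distrib, eq_div_iff ?hden]
      case hden =>
        refine Finset.prod_ne_zero_iff.2 fun q _ => Finset.prod_ne_zero_iff.2 fun bb _ => ?_
        exact_mod_cast Nat.factorial_ne_zero _
      exact_mod_cast hNat
    · rw [if_neg hW, zero_mul]
      have hempt : (Finset.univ.filter fun g : Fin n → Fin dB × Fin dB =>
          cmat (fun k => ((i k).1, (g k).1, (i k).2))
            (fun k => ((j k).1, (g k).2, (j k).2)) = Ez) = ∅ := by
        refine Finset.filter_eq_empty_iff.2 fun g _ h => hW ?_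
        rw [← h]
        exact PtBhelp.Fz_margW n dA dB dC i j g
      rw [hempt]
      simp
  rw [hcard]
  ring
end

section
/- Let G be a finite group, V : G → unitary d_B × d_B complex matrices a unitary representation (V (g h) = V g · V h and V 1 = 1), and ρ a density matrix on ℂ^{d_A} ⊗ ℂ^{d_B} invariant under the action on B, i.e. (1_{d_A} ⊗ V g) · ρ · (1_{d_A} ⊗ V g)† = ρ for all g ∈ G. Then for every positive semidefinite Y on ℂ^{d_A} ⊗ ℂ^{d_B} with Tr_A Y = (1/d_A) · 1_{d_B}, the twirl Ȳ := (1/|G|) ∑_{g ∈ G} (1_{d_A} ⊗ V g) · Y · (1_{d_A} ⊗ V g)† is positive semidefinite, satisfies Tr_A Ȳ = (1/d_A) · 1_{d_B}, and Tr (ρ · Ȳ) = Tr (ρ · Y). Consequently the maximal singlet fraction F(ρ) equals the supremum of Re (Tr (ρ · Y)) restricted to feasible Y that are invariant under conjugation by 1_{d_A} ⊗ V g for all g ∈ G. -/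
open scoped BigOperators
open Matrix
open scoped ComplexOrder

/-- The partial trace over the first (`A`) factor. -/
noncomputable def ptrA {A B : Type*} [Fintype A]
    (Y : Matrix (A × B) (A × B) ℂ) : Matrix B B ℂ :=
  Matrix.of fun b b' => ∑ a, Y (a, b) (a, b')

/-- The maximal singlet fraction of a bipartite (density) matrix `ρ`:
the supremum of `Re (Tr (ρ · Y))` over positive semidefinite `Y` with
`Tr_A Y = (1 / dim A) · 1`. -/
noncomputable def msf {A B : Type*} [Fintype A] [Fintype B] [DecidableEq A] [DecidableEq B]
    (ρ : Matrix (A × B) (A × B) ℂ) : ℝ :=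
  sSup { x : ℝ | ∃ Y : Matrix (A × B) (A × B) ℂ, Y.PosSemidef ∧
    ptrA Y = ((Fintype.card A : ℂ))⁻¹ • (1 : Matrix B B ℂ) ∧
    x = ((ρ * Y).trace).re }

/-- The Kronecker product `1_{d_A} ⊗ V` on `ℂ^{d_A} ⊗ ℂ^{d_B}`. -/
def idKron (dA dB : ℕ) (V : Matrix (Fin dB) (Fin dB) ℂ) :
    Matrix (Fin dA × Fin dB) (Fin dA × Fin dB) ℂ :=
  Matrix.of fun p q => (if p.1 = q.1 then 1 else 0) * V p.2 q.2

/-- The `G`-twirl of `Y` with respect to `g ↦ 1 ⊗ V g`: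
`(1/|G|) ∑ g, (1 ⊗ V g) · Y · (1 ⊗ V g)†`. -/
noncomputable def twirl {G : Type*} [Fintype G] (dA dB : ℕ)
    (V : G → Matrix (Fin dB) (Fin dB) ℂ)
    (Y : Matrix (Fin dA × Fin dB) (Fin dA × Fin dB) ℂ) :
    Matrix (Fin dA × Fin dB) (Fin dA × Fin dB) ℂ :=
  ((Fintype.card G : ℂ))⁻¹ •
    ∑ g : G, idKron dA dB (V g) * Y * (idKron dA dB (V g))ᴴ

section aux
variable {dA dB : ℕ}

lemma idKron_conjT (V : Matrix (Fin dB) (Fin dB) ℂ) :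
    (idKron dA dB V)ᴴ = idKron dA dB Vᴴ := by
  ext p q
  by_cases h : p.1 = q.1
  · simp [idKron, conjTranspose_apply, h]
  · have h' : ¬ q.1 = p.1 := fun hh => h hh.symm
    simp [idKron, conjTranspose_apply, h, h']

lemma idKron_mul_apply (U : Matrix (Fin dB) (Fin dB) ℂ)
    (Y : Matrix (Fin dA × Fin dB) (Fin dA × Fin dB) ℂ) (p q : Fin dA × Fin dB) :
    (idKron dA dB U * Y) p q = ∑ c, U p.2 c * Y (p.1, c) q := by
  rw [Matrix.mul_apply, Fintype.sum_prod_type, Finset.sum_eq_single p.1]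
  · simp [idKron]
  · intro b _ hb
    simp [idKron, (Ne.symm hb : p.1 ≠ b)]
  · simp

lemma mul_idKron_apply (W : Matrix (Fin dB) (Fin dB) ℂ)
    (Y : Matrix (Fin dA × Fin dB) (Fin dA × Fin dB) ℂ) (p q : Fin dA × Fin dB) :
    (Y * idKron dA dB W) p q = ∑ c, Y p (q.1, c) * W c q.2 := by
  rw [Matrix.mul_apply, Fintype.sum_prod_type, Finset.sum_eq_single q.1]
  · simp [idKron, mul_comm, mul_left_comm]
  · intro b _ hb
    simp [idKron, hb]
  · simp

lemma idKron_mul (U W : Matrix (Fin dB) (Fin dB) ℂ) :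
    idKron dA dB U * idKron dA dB W = idKron dA dB (U * W) := by
  ext p q
  rw [idKron_mul_apply]
  simp [idKron, Matrix.mul_apply, Finset.mul_sum, mul_assoc]

lemma idKron_one : idKron dA dB (1 : Matrix (Fin dB) (Fin dB) ℂ) = 1 := by
  ext p q
  simp only [idKron, Matrix.of_apply, Matrix.one_apply, Prod.ext_iff]
  split_ifs <;> simp_all

lemma ptrA_smul {A B : Type*} [Fintype A] (c : ℂ) (Y : Matrix (A × B) (A × B) ℂ) :
    ptrA (c • Y) = c • ptrA Y := by
  ext b b'; simp [ptrA, Finset.mul_sum]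

lemma ptrA_sum {A B ι : Type*} [Fintype A] (s : Finset ι)
    (f : ι → Matrix (A × B) (A × B) ℂ) :
    ptrA (∑ i ∈ s, f i) = ∑ i ∈ s, ptrA (f i) := by
  ext b b'
  simp only [ptrA, Matrix.of_apply, Matrix.sum_apply]
  rw [Finset.sum_comm]

lemma ptrA_conj (U W : Matrix (Fin dB) (Fin dB) ℂ)
    (Y : Matrix (Fin dA × Fin dB) (Fin dA × Fin dB) ℂ) :
    ptrA (idKron dA dB U * Y * idKron dA dB W) = U * ptrA Y * W := by
  ext b b'
  simp only [ptrA, Matrix.of_apply]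
  simp only [mul_idKron_apply, idKron_mul_apply]
  simp only [Matrix.mul_apply, ptrA, Matrix.of_apply]
  simp only [Finset.sum_mul, Finset.mul_sum]
  rw [Finset.sum_comm]
  exact Finset.sum_congr rfl fun c _ => Finset.sum_comm

lemma psd_smul_inv_card {n : Type*} [Fintype n] (k : ℕ)
    {A : Matrix n n ℂ} (hA : A.PosSemidef) : (((k : ℂ))⁻¹ • A).PosSemidef := by
  constructor
  · unfold Matrix.IsHermitian
    rw [Matrix.conjTranspose_smul, hA.1.eq]
    congr 1
    simp [starRingEnd_apply]
  · intro x
    have h1 : (0:ℂ) ≤ (k:ℂ)⁻¹ := by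
      rw [← Complex.ofReal_natCast, ← Complex.ofReal_inv]
      exact_mod_cast inv_nonneg.mpr (Nat.cast_nonneg k : (0:ℝ) ≤ k)
    exact (hA.smul h1).2 x

end aux

set_option maxHeartbeats 1000000 in
/-- For a `G`-invariant state `ρ`, any feasible `Y` for the maximal singlet fraction SDP can be
twirled without changing feasibility or the objective value; consequently the maximal singlet
fraction is attained over `G`-invariant feasible `Y`. -/
theorem msf_group_invariant {G : Type*} [Group G] [Fintype G]
    (dA dB : ℕ) (hdA : 1 ≤ dA) (hdB : 1 ≤ dB)
    (V : G → Matrix (Fin dB) (Fin dB) ℂ)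
    (hmul : ∀ g h : G, V (g * h) = V g * V h) (hone : V 1 = 1)
    (hunitary : ∀ g : G, (V g)ᴴ * V g = 1 ∧ V g * (V g)ᴴ = 1)
    (ρ : Matrix (Fin dA × Fin dB) (Fin dA × Fin dB) ℂ)
    (hρPSD : ρ.PosSemidef) (hρtr : ρ.trace = 1)
    (hρinv : ∀ g : G, idKron dA dB (V g) * ρ * (idKron dA dB (V g))ᴴ = ρ) :
    (∀ Y : Matrix (Fin dA × Fin dB) (Fin dA × Fin dB) ℂ,
      Y.PosSemidef → ptrA Y = ((dA : ℂ))⁻¹ • (1 : Matrix (Fin dB) (Fin dB) ℂ) →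
        (twirl dA dB V Y).PosSemidef ∧
        ptrA (twirl dA dB V Y) = ((dA : ℂ))⁻¹ • (1 : Matrix (Fin dB) (Fin dB) ℂ) ∧
        (ρ * twirl dA dB V Y).trace = (ρ * Y).trace) ∧
    msf ρ = sSup { x : ℝ | ∃ Y : Matrix (Fin dA × Fin dB) (Fin dA × Fin dB) ℂ,
      Y.PosSemidef ∧ ptrA Y = ((dA : ℂ))⁻¹ • (1 : Matrix (Fin dB) (Fin dB) ℂ) ∧
      (∀ g : G, idKron dA dB (V g) * Y * (idKron dA dB (V g))ᴴ = Y) ∧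
      x = ((ρ * Y).trace).re } := by
  have hcard : (Fintype.card G : ℂ) ≠ 0 := by
    exact_mod_cast (Nat.cast_ne_zero (R := ℂ)).mpr Fintype.card_ne_zero
  have hUu : ∀ g : G, (idKron dA dB (V g))ᴴ * idKron dA dB (V g) = 1 := fun g => by
    rw [idKron_conjT, idKron_mul, (hunitary g).1, idKron_one]
  have hρinv' : ∀ g : G, (idKron dA dB (V g))ᴴ * ρ * idKron dA dB (V g) = ρ := by
    intro g
    set U := idKron dA dB (V g) with hU
    calc Uᴴ * ρ * U = Uᴴ * (U * ρ * Uᴴ) * U := by rw [hρinv g]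
      _ = (Uᴴ * U) * ρ * (Uᴴ * U) := by noncomm_ring
      _ = ρ := by rw [hUu g, Matrix.one_mul, Matrix.mul_one]
  have htr : ∀ (g : G) (Y : Matrix (Fin dA × Fin dB) (Fin dA × Fin dB) ℂ),
      (ρ * (idKron dA dB (V g) * Y * (idKron dA dB (V g))ᴴ)).trace = (ρ * Y).trace := by
    intro g Y
    set U := idKron dA dB (V g) with hU
    have h1 : ρ * (U * Y * Uᴴ) = (ρ * U * Y) * Uᴴ := by noncomm_ring
    rw [h1, Matrix.trace_mul_comm,
      show Uᴴ * (ρ * U * Y) = (Uᴴ * ρ * U) * Y by noncomm_ring, hρinv' g]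
  have key : ∀ Y : Matrix (Fin dA × Fin dB) (Fin dA × Fin dB) ℂ,
      Y.PosSemidef → ptrA Y = ((dA : ℂ))⁻¹ • (1 : Matrix (Fin dB) (Fin dB) ℂ) →
        (twirl dA dB V Y).PosSemidef ∧
        ptrA (twirl dA dB V Y) = ((dA : ℂ))⁻¹ • (1 : Matrix (Fin dB) (Fin dB) ℂ) ∧
        (ρ * twirl dA dB V Y).trace = (ρ * Y).trace := by
    intro Y hY hYtr
    refine ⟨?_, ?_, ?_⟩
    · apply psd_smul_inv_card
      apply Finset.sum_induction _ _ (fun a b ha hb => ha.add hb) Matrix.PosSemidef.zero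
      intro g _
      exact hY.mul_mul_conjTranspose_same _
    · rw [twirl, ptrA_smul, ptrA_sum]
      have hterm : ∀ g : G, ptrA (idKron dA dB (V g) * Y * (idKron dA dB (V g))ᴴ)
          = ((dA : ℂ))⁻¹ • (1 : Matrix (Fin dB) (Fin dB) ℂ) := by
        intro g
        rw [idKron_conjT, ptrA_conj, hYtr, Matrix.mul_smul, Matrix.mul_one,
          Matrix.smul_mul, (hunitary g).2]
      rw [Finset.sum_congr rfl fun g _ => hterm g, Finset.sum_const, Finset.card_univ,
        ← Nat.cast_smul_eq_nsmul ℂ, smul_smul, inv_mul_cancel₀ hcard, one_smul]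
    · rw [twirl, Matrix.mul_smul, Matrix.trace_smul, Finset.mul_sum, Matrix.trace_sum,
        Finset.sum_congr rfl fun g _ => htr g Y, Finset.sum_const, Finset.card_univ,
        nsmul_eq_mul, smul_eq_mul, ← mul_assoc, inv_mul_cancel₀ hcard, one_mul]
  refine ⟨key, ?_⟩
  have hinv : ∀ (Y : Matrix (Fin dA × Fin dB) (Fin dA × Fin dB) ℂ) (h : G),
      idKron dA dB (V h) * twirl dA dB V Y * (idKron dA dB (V h))ᴴ = twirl dA dB V Y := by
    intro Y h
    rw [twirl, Matrix.mul_smul, Matrix.smul_mul, Finset.mul_sum, Finset.sum_mul]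
    congr 1
    conv_rhs => rw [← Equiv.sum_comp (Equiv.mulLeft h)]
    refine Finset.sum_congr rfl fun g _ => ?_
    simp only [Equiv.coe_mulLeft]
    rw [hmul h g, ← idKron_mul, Matrix.conjTranspose_mul]
    simp only [Matrix.mul_assoc]
  unfold msf
  rw [show (Fintype.card (Fin dA) : ℂ) = (dA : ℂ) by simp]
  congr 1
  ext x
  constructor
  · rintro ⟨Y, hY, hYtr, rfl⟩
    obtain ⟨h1, h2, h3⟩ := key Y hY hYtr
    exact ⟨twirl dA dB V Y, h1, h2, fun g => hinv Y g, by rw [h3]⟩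
  · rintro ⟨Y, hY, hYtr, _, rfl⟩
    exact ⟨Y, hY, hYtr, rfl⟩
end

section
/- Let d ≥ 1 and let ρ be a density matrix on ℂ^d ⊗ ℂ^d whose partial transpose ρ^{T_B} is positive semidefinite. Then ⟨Φ_d| ρ |Φ_d⟩ ≤ 1/d, where |Φ_d⟩ := (1/√d) ∑_{i} |i⟩ ⊗ |i⟩ is the maximally entangled unit vector on ℂ^d ⊗ ℂ^d. -/
open scoped BigOperators
open scoped ComplexOrder
open Matrix

/-- The partial transpose over `B` of a matrix on `ℂ^d ⊗ ℂ^d`. -/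
def ptransB (d : ℕ) (X : Matrix (Fin d × Fin d) (Fin d × Fin d) ℂ) :
    Matrix (Fin d × Fin d) (Fin d × Fin d) ℂ :=
  Matrix.of fun p q => X (p.1, q.2) (q.1, p.2)

/-- The maximally entangled unit vector `|Φ_d⟩ = (1/√d) ∑ i, |i⟩ ⊗ |i⟩`. -/
noncomputable def mes (d : ℕ) : Fin d × Fin d → ℂ :=
  fun p => if p.1 = p.2 then ((Real.sqrt d : ℝ) : ℂ)⁻¹ else 0

/-- For a PSD matrix, `0 ≤ σ p p + σ q q - σ p q - σ q p`. -/
theorem psd_entry_bound {n : Type*} [Fintype n] [DecidableEq n] (σ : Matrix n n ℂ)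
    (hσ : σ.PosSemidef) (p q : n) : 0 ≤ σ p p + σ q q - σ p q - σ q p := by
  have h := hσ.dotProduct_mulVec_nonneg (fun r => (if r = p then 1 else 0) - (if r = q then 1 else 0))
  simp only [Matrix.mulVec, dotProduct, Pi.star_apply, star_sub,
    apply_ite (star : ℂ → ℂ), star_one, star_zero, mul_sub, sub_mul, Finset.sum_sub_distrib,
    ite_mul, one_mul, zero_mul, mul_ite, mul_one, mul_zero,
    Finset.sum_ite_eq', Finset.mem_univ, if_true] at h
  convert h using 1
  ring

/-- For a PSD matrix on a product type, the swap-sum is bounded by the trace. -/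
theorem psd_swap_sum_le_trace (d : ℕ) (σ : Matrix (Fin d × Fin d) (Fin d × Fin d) ℂ)
    (hσ : σ.PosSemidef) :
    (∑ p : Fin d × Fin d, σ p p.swap).re ≤ σ.trace.re := by
  have key : 0 ≤ (∑ p : Fin d × Fin d, (σ p p + σ p.swap p.swap - σ p p.swap - σ p.swap p)) :=
    Finset.sum_nonneg fun p _ => psd_entry_bound σ hσ p p.swap
  have e1 : ∑ p : Fin d × Fin d, σ p.swap p.swap = σ.trace := by
    rw [Matrix.trace]
    exact Fintype.sum_equiv (Equiv.prodComm _ _) _ _ (fun p => rfl)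
  have e2 : ∑ p : Fin d × Fin d, σ p.swap p = ∑ p : Fin d × Fin d, σ p p.swap :=
    Fintype.sum_equiv (Equiv.prodComm _ _) _ _ (fun p => by simp)
  rw [Finset.sum_sub_distrib, Finset.sum_sub_distrib, Finset.sum_add_distrib, e1, e2] at key
  have h1 := (Complex.le_def.mp key).1
  simp only [Complex.zero_re, Complex.sub_re, Complex.add_re, Matrix.trace, Matrix.diag]
    at h1 ⊢
  linarith

/-- PPT bound on the singlet fraction: if `ρ` is a density matrix on `ℂ^d ⊗ ℂ^d` whose
partial transpose is positive semidefinite, then `⟨Φ_d| ρ |Φ_d⟩ ≤ 1/d`. -/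
theorem ppt_singlet_fraction_bound (d : ℕ) (hd : 1 ≤ d)
    (ρ : Matrix (Fin d × Fin d) (Fin d × Fin d) ℂ)
    (hρ : ρ.PosSemidef) (hρtr : ρ.trace = 1)
    (hPPT : (ptransB d ρ).PosSemidef) :
    ((∑ p : Fin d × Fin d, (starRingEnd ℂ) (mes d p) * (ρ.mulVec (mes d)) p)).re ≤
      1 / (d : ℝ) := by
  set σ := ptransB d ρ with hσdef
  -- Step 1: rewrite the LHS
  have hc : ((Real.sqrt d : ℝ) : ℂ)⁻¹ * ((Real.sqrt d : ℝ) : ℂ)⁻¹ = (((d:ℝ)⁻¹ : ℝ) : ℂ) := by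
    rw [← mul_inv, ← Complex.ofReal_mul, Real.mul_self_sqrt (Nat.cast_nonneg d),
      Complex.ofReal_inv]
  have hLHS : (∑ p : Fin d × Fin d, (starRingEnd ℂ) (mes d p) * (ρ.mulVec (mes d)) p) =
      (((d : ℝ)⁻¹ : ℝ) : ℂ) * ∑ i : Fin d, ∑ j : Fin d, ρ (i, i) (j, j) := by
    simp only [mes, Matrix.mulVec, dotProduct, apply_ite (starRingEnd ℂ), map_inv₀,
      Complex.conj_ofReal, map_zero, ite_mul, zero_mul, mul_ite, mul_zero]
    rw [Fintype.sum_prod_type]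
    simp only [Finset.sum_ite_eq, Finset.mem_univ, if_true]
    rw [Finset.mul_sum]
    refine Finset.sum_congr rfl fun i _ => ?_
    rw [Fintype.sum_prod_type]
    simp only [Finset.sum_ite_eq, Finset.mem_univ, if_true, Finset.mul_sum]
    refine Finset.sum_congr rfl fun j _ => ?_
    rw [← hc]; ring
  -- Step 2: the double sum is the swap-sum of the partial transpose
  have hswap : (∑ i : Fin d, ∑ j : Fin d, ρ (i, i) (j, j)) =
      ∑ p : Fin d × Fin d, σ p p.swap := by
    rw [Fintype.sum_prod_type]
    rfl
  -- Step 3: trace of σ equals trace of ρ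
  have htr : σ.trace = 1 := by
    rw [← hρtr, Matrix.trace, Matrix.trace]
    rfl
  -- Step 4: combine
  have hb : (∑ p : Fin d × Fin d, σ p p.swap).re ≤ 1 := by
    have := psd_swap_sum_le_trace d σ hPPT
    rw [htr] at this
    simpa using this
  rw [hLHS, hswap, Complex.re_ofReal_mul]
  have hdpos : (0:ℝ) < (d:ℝ) := by exact_mod_cast hd
  rw [one_div]
  calc (d:ℝ)⁻¹ * (∑ p : Fin d × Fin d, σ p p.swap).re
      ≤ (d:ℝ)⁻¹ * 1 := by
        exact mul_le_mul_of_nonneg_left hb (inv_nonneg.mpr hdpos.le)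
    _ = (d:ℝ)⁻¹ := mul_one _
end

section
/- Let d, d_B ≥ 1, let p : Fin d → ℝ be a probability vector (nonnegative, summing to 1), and for each x ∈ Fin d let ρ_x be a density matrix on ℂ^{d_B}. Let ρ be the classical-quantum density matrix on ℂ^d ⊗ ℂ^{d_B} defined by ρ ((x, b), (x', b')) := if x = x' then p x · ρ_x (b, b') else 0. Then the maximal singlet fraction satisfies F(ρ) = (1/d) · sSup { ∑_x p x · Re (Tr (ρ_x · Λ x)) : Λ : Fin d → positive semidefinite d_B × d_B matrices with ∑_x Λ x = 1_{d_B} }, i.e. F(ρ) equals 1/d times the optimal guessing probability of the ensemble {(p x, ρ_x)} over all POVMs. -/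
open scoped BigOperators
open scoped ComplexOrder
open Matrix

open Pointwise

-- helper: nonneg real scalar times PSD is PSD
lemma psd_smul_real {n : Type*} [Fintype n] {M : Matrix n n ℂ} (hM : M.PosSemidef)
    {c : ℝ} (hc : 0 ≤ c) : ((c : ℂ) • M).PosSemidef := by
  rw [posSemidef_iff_dotProduct_mulVec]
  constructor
  · rw [Matrix.IsHermitian, conjTranspose_smul, hM.1]
    congr 1
    simp
  · intro x
    rw [smul_mulVec, dotProduct_smul, smul_eq_mul]
    exact mul_nonneg (Complex.zero_le_real.2 hc) (hM.dotProduct_mulVec_nonneg x)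

-- helper: block diagonal of PSD family is PSD
lemma psd_blockDiag {d dB : ℕ} (Λ : Fin d → Matrix (Fin dB) (Fin dB) ℂ)
    (hΛ : ∀ i, (Λ i).PosSemidef) :
    (Matrix.of fun q r : Fin d × Fin dB =>
      if q.1 = r.1 then Λ q.1 q.2 r.2 else 0).PosSemidef := by
  rw [posSemidef_iff_dotProduct_mulVec]
  constructor
  · ext ⟨i, b⟩ ⟨j, b'⟩
    simp only [conjTranspose_apply, of_apply]
    by_cases h : i = j
    · subst h
      simp [((hΛ i).1.apply b b').symm]
    · simp [h, Ne.symm h]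
  · intro x
    have key : dotProduct (star x) ((Matrix.of fun q r : Fin d × Fin dB =>
        if q.1 = r.1 then Λ q.1 q.2 r.2 else 0) *ᵥ x)
        = ∑ i, dotProduct (star fun b => x (i, b)) ((Λ i) *ᵥ fun b => x (i, b)) := by
      simp only [dotProduct, mulVec, Pi.star_apply, of_apply]
      rw [Fintype.sum_prod_type]
      refine Finset.sum_congr rfl fun i _ => ?_
      refine Finset.sum_congr rfl fun b _ => ?_
      congr 1
      rw [Fintype.sum_prod_type]
      rw [Finset.sum_eq_single i]
      · simp
      · intro j _ hj
        simp [Ne.symm hj]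
      · simp
    rw [key]
    exact Finset.sum_nonneg fun i _ => (hΛ i).dotProduct_mulVec_nonneg _

-- trace of cq-state times Y decomposes into blocks
lemma trace_cq {d dB : ℕ} (p : Fin d → ℝ) (ρx : Fin d → Matrix (Fin dB) (Fin dB) ℂ)
    (Y : Matrix (Fin d × Fin dB) (Fin d × Fin dB) ℂ) :
    (((Matrix.of fun q r : Fin d × Fin dB =>
        if q.1 = r.1 then (p q.1 : ℂ) * ρx q.1 q.2 r.2 else 0) * Y).trace).re
      = ∑ i, p i * ((ρx i * Matrix.of fun b b' => Y (i, b) (i, b')).trace).re := by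
  have : ((Matrix.of fun q r : Fin d × Fin dB =>
        if q.1 = r.1 then (p q.1 : ℂ) * ρx q.1 q.2 r.2 else 0) * Y).trace
      = ∑ i, (p i : ℂ) * (ρx i * Matrix.of fun b b' => Y (i, b) (i, b')).trace := by
    simp only [Matrix.trace, diag_apply, mul_apply, of_apply]
    rw [Fintype.sum_prod_type]
    refine Finset.sum_congr rfl fun i _ => ?_
    rw [Finset.mul_sum]
    refine Finset.sum_congr rfl fun b _ => ?_
    rw [Finset.mul_sum, Fintype.sum_prod_type]
    rw [Finset.sum_eq_single i]
    · simp [Finset.mul_sum, mul_assoc]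
    · intro j _ hj
      simp [Ne.symm hj]
    · simp
  rw [this, Complex.re_sum]
  refine Finset.sum_congr rfl fun i _ => ?_
  simp [Complex.mul_re]

/-- For a classical-quantum state `ρ = ∑ x, p x |x⟩⟨x| ⊗ ρ_x`, the maximal singlet fraction
equals `1/d` times the optimal guessing probability of the ensemble `{(p x, ρ_x)}` over all
POVMs. -/
theorem msf_cq_guessing (d dB : ℕ) (hd : 1 ≤ d) (hdB : 1 ≤ dB)
    (p : Fin d → ℝ) (hp0 : ∀ x, 0 ≤ p x) (hp1 : ∑ x, p x = 1)
    (ρx : Fin d → Matrix (Fin dB) (Fin dB) ℂ)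
    (hρxPSD : ∀ x, (ρx x).PosSemidef) (hρxtr : ∀ x, (ρx x).trace = 1) :
    msf (Matrix.of fun q r : Fin d × Fin dB =>
        if q.1 = r.1 then (p q.1 : ℂ) * ρx q.1 q.2 r.2 else 0) =
      (1 / (d : ℝ)) *
        sSup { x : ℝ | ∃ Λ : Fin d → Matrix (Fin dB) (Fin dB) ℂ,
          (∀ i, (Λ i).PosSemidef) ∧ (∑ i, Λ i) = (1 : Matrix (Fin dB) (Fin dB) ℂ) ∧
          x = ∑ i, p i * ((ρx i * Λ i).trace).re } := by
  have hd0 : (d : ℝ) ≠ 0 := by positivity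
  have hdC : (d : ℂ) ≠ 0 := by exact_mod_cast Nat.cast_ne_zero.2 (by omega)
  have hset : { x : ℝ | ∃ Y : Matrix (Fin d × Fin dB) (Fin d × Fin dB) ℂ, Y.PosSemidef ∧
      ptrA Y = ((Fintype.card (Fin d) : ℂ))⁻¹ • (1 : Matrix (Fin dB) (Fin dB) ℂ) ∧
      x = (((Matrix.of fun q r : Fin d × Fin dB =>
        if q.1 = r.1 then (p q.1 : ℂ) * ρx q.1 q.2 r.2 else 0) * Y).trace).re }
      = (1 / (d : ℝ)) • { x : ℝ | ∃ Λ : Fin d → Matrix (Fin dB) (Fin dB) ℂ,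
          (∀ i, (Λ i).PosSemidef) ∧ (∑ i, Λ i) = (1 : Matrix (Fin dB) (Fin dB) ℂ) ∧
          x = ∑ i, p i * ((ρx i * Λ i).trace).re } := by
    ext x
    constructor
    · rintro ⟨Y, hY, hptr, rfl⟩
      set Λ : Fin d → Matrix (Fin dB) (Fin dB) ℂ :=
        fun i => (d : ℂ) • (Matrix.of fun b b' => Y (i, b) (i, b')) with hΛdef
      have hΛpsd : ∀ i, (Λ i).PosSemidef := fun i => by
        have heq : (Matrix.of fun b b' => Y (i, b) (i, b'))
            = Y.submatrix (fun b => (i, b)) (fun b => (i, b)) := rfl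
        rw [hΛdef]
        have := psd_smul_real (c := (d : ℝ)) (heq ▸ hY.submatrix fun b => (i, b))
          (Nat.cast_nonneg d)
        simpa using this
      have hΛsum : (∑ i, Λ i) = 1 := by
        have h1 : ∑ i, (Matrix.of fun b b' => Y (i, b) (i, b')) = ptrA Y := by
          ext b b'
          simp [ptrA, Matrix.sum_apply]
        rw [hΛdef, ← Finset.smul_sum, h1, hptr]
        simp [smul_smul, mul_inv_cancel₀ hdC]
      have hval : ∀ i, ((ρx i * Λ i).trace).re
          = (d : ℝ) * ((ρx i * Matrix.of fun b b' => Y (i, b) (i, b')).trace).re := by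
        intro i
        rw [hΛdef, Matrix.mul_smul, trace_smul]
        simp [Complex.mul_re]
      refine Set.mem_smul_set.2 ⟨∑ i, p i * ((ρx i * Λ i).trace).re,
        ⟨Λ, hΛpsd, hΛsum, rfl⟩, ?_⟩
      rw [smul_eq_mul, trace_cq, Finset.mul_sum]
      refine Finset.sum_congr rfl fun i _ => ?_
      rw [hval i]
      field_simp
    · rintro ⟨y, ⟨Λ, hΛpsd, hΛsum, rfl⟩, rfl⟩
      set Y : Matrix (Fin d × Fin dB) (Fin d × Fin dB) ℂ :=
        Matrix.of (fun q r : Fin d × Fin dB =>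
          if q.1 = r.1 then ((d : ℂ)⁻¹ • Λ q.1) q.2 r.2 else 0) with hYdef
      have hYpsd : Y.PosSemidef := by
        rw [hYdef]
        exact psd_blockDiag (fun i => (d : ℂ)⁻¹ • Λ i) fun i => by
          show ((d : ℂ)⁻¹ • Λ i).PosSemidef
          have heq : (d : ℂ)⁻¹ • Λ i = (((d : ℝ)⁻¹ : ℝ) : ℂ) • Λ i := by push_cast; ring_nf
          rw [heq]
          exact psd_smul_real (hΛpsd i) (by positivity)
      refine ⟨Y, hYpsd, ?_, ?_⟩
      · ext b b'
        simp only [ptrA, of_apply, hYdef]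
        rw [show ((Fintype.card (Fin d) : ℂ))⁻¹ = (d : ℂ)⁻¹ by simp]
        have hs : ∑ a : Fin d, Λ a b b' = (1 : Matrix (Fin dB) (Fin dB) ℂ) b b' := by
          rw [← hΛsum]; simp [Matrix.sum_apply]
        simp [Matrix.smul_apply, ← Finset.mul_sum, hs]
      · simp only [smul_eq_mul]
        rw [trace_cq, Finset.mul_sum]
        refine Finset.sum_congr rfl fun i _ => ?_
        have hB : (Matrix.of fun b b' => Y (i, b) (i, b')) = (d : ℂ)⁻¹ • Λ i := by
          ext b b'; simp [hYdef]
        rw [hB, Matrix.mul_smul, trace_smul]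
        have hre : ((d : ℂ)⁻¹ • (ρx i * Λ i).trace).re
            = (d : ℝ)⁻¹ * ((ρx i * Λ i).trace).re := by
          rw [show ((d : ℂ)⁻¹ : ℂ) = (((d : ℝ)⁻¹ : ℝ) : ℂ) by push_cast; ring]
          simp [Complex.mul_re, smul_eq_mul]
        rw [hre]; ring
  rw [msf, hset, Real.sSup_smul_of_nonneg (by positivity), smul_eq_mul]
end
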